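/- arXiv:1801.04835 — 4 statements merged into one kernel-verified Lean document; each statement's English description precedes it below -/
import Mathlib

section
/- Fix an integer s ≥ 2 and a real λ with 0 < λ < 1/((2s−1)² − 2). For n ≥ s let Ω_n be the set of (1,s)-tilings of the square region R_n = {0,…,n−1}² ⊆ ℤ² and let N = n². Let P be the transition matrix of the weighted central-flip chain MC_{(1,s)-square} on Ω_n: P(T,T') = 1/(N(λ+1)) if T' is obtained from T by replacing one s×s tile with s² unit tiles; P(T,T') = λ/(N(λ+1)) if T' is obtained from T by replacing s² unit tiles filling an s×s square with one s×s tile; P(T,T') = 0 for all other T' ≠ T; and P(T,T) = 1 − Σ_{T'≠T} P(T,T'). Its stationary distribution is π(T) = λ^{b(T)}/Z where b(T) is the number of s×s tiles of T and Z = Σ_{T ∈ Ω_n} λ^{b(T)}. Then the chain is rapidly mixing: there is a constant c > 0 (depending only on s and λ) such that for all n ≥ s and all ε ∈ (0,1), τ_mix(ε) ≤ c · n⁴ · ln(n/ε). -/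
/-!
Path coupling, in its dual form on test functions. Call `f` `L`-Lipschitz if it changes by at
most `L` across every central flip. If `T'` arises from `T` by splitting the big tile at `p`,
pair each move from `T` with the same move from `T'`; the paired outcomes are again one flip
apart, the split at `p` from `T` is paired with the merge at `p` from `T'`, and `T'` has at most
`(2s-1)² - 1` further free positions, all overlapping `S(p,s)`. Hence one step maps
`L`-Lipschitz functions to `(1 - η/n²) L`-Lipschitz ones, `η = (1 - λ((2s-1)² - 2))/(λ+1) > 0`.
Every tiling is at most `n²` flips from the all-unit tiling and the chain is reversible for `π`,
so testing `P^t(x,·) - π` against its sign gives `d_x(t) ≤ 2n²(1 - η/n²)^t ≤ 2n² e^{-tη/n²}`.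
-/

open Finset

/-- The k×k square of cells with lower-left corner `p`. -/
def sqCells (p : ℤ × ℤ) (k : ℕ) : Finset (ℤ × ℤ) :=
  (Finset.range k ×ˢ Finset.range k).image fun ij => (p.1 + ij.1, p.2 + ij.2)

/-- `T` is an (m,s)-tiling of the finite region `R`. -/
def IsTiling (m s : ℕ) (R : Finset (ℤ × ℤ)) (T : Finset ((ℤ × ℤ) × ℕ)) : Prop :=
  (∀ t ∈ T, t.2 = m ∨ t.2 = s) ∧
  (∀ t ∈ T, ∀ t' ∈ T, t ≠ t' → Disjoint (sqCells t.1 t.2) (sqCells t'.1 t'.2)) ∧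
  T.biUnion (fun t => sqCells t.1 t.2) = R

/-- `T'` is obtained from `T` by replacing one s×s tile by s² unit tiles. -/
def centralFlipTo (s : ℕ) (T T' : Finset ((ℤ × ℤ) × ℕ)) : Prop :=
  ∃ p : ℤ × ℤ, (p, s) ∈ T ∧
    T' = (T.erase (p, s)) ∪ (sqCells p s).image (fun q => (q, 1))

/-- `T` and `T'` differ by a central flip. -/
def CentralFlip (s : ℕ) (T T' : Finset ((ℤ × ℤ) × ℕ)) : Prop :=
  centralFlipTo s T T' ∨ centralFlipTo s T' T

/-- `t`-step transition probabilities of the kernel `P` on the finite state space `Ω`. -/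
noncomputable def matPow {X : Type*} [DecidableEq X] (Ω : Finset X) (P : X → X → ℝ) :
    ℕ → X → X → ℝ
  | 0 => fun x y => if x = y then 1 else 0
  | t + 1 => fun x y => ∑ z ∈ Ω, matPow Ω P t x z * P z y

/-- Total variation distance between two distributions on `Ω`. -/
noncomputable def dTV {X : Type*} (Ω : Finset X) (μ ν : X → ℝ) : ℝ :=
  (1 / 2) * ∑ y ∈ Ω, |μ y - ν y|

/-- Mixing time: the maximum over starting states `x ∈ Ω` of the least `t` such that the
total variation distance from the distribution `π` is at most `ε` from time `t` on. -/
noncomputable def mixingTime {X : Type*} [DecidableEq X] (Ω : Finset X) (P : X → X → ℝ)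
    (π : X → ℝ) (ε : ℝ) : ℕ :=
  Ω.sup fun x => sInf {t | ∀ t' ≥ t, dTV Ω (fun y => matPow Ω P t' x y) π ≤ ε}

/-- The n×n square region in ℤ². -/
def squareRegion (n : ℕ) : Finset (ℤ × ℤ) :=
  (Finset.range n ×ˢ Finset.range n).image fun ij => ((ij.1 : ℤ), (ij.2 : ℤ))

/-- The number of s×s tiles of a tiling `T`. -/
def bigCount (s : ℕ) (T : Finset ((ℤ × ℤ) × ℕ)) : ℕ :=
  (T.filter fun t => t.2 = s).card

abbrev Tile := (ℤ × ℤ) × ℕ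

def unitTiles (p : ℤ × ℤ) (s : ℕ) : Finset Tile := (sqCells p s).image fun q => (q, 1)

def splitAt (s : ℕ) (x : Finset Tile) (p : ℤ × ℤ) : Finset Tile :=
  x.erase (p, s) ∪ unitTiles p s

def mergeAt (s : ℕ) (x : Finset Tile) (r : ℤ × ℤ) : Finset Tile :=
  (x \ unitTiles r s) ∪ {(r, s)}

def bigPositions (s : ℕ) (x : Finset Tile) : Finset (ℤ × ℤ) :=
  (x.filter fun t => t.2 = s).image Prod.fst

def freePositions (s n : ℕ) (x : Finset Tile) : Finset (ℤ × ℤ) :=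
  (squareRegion n).filter fun r => unitTiles r s ⊆ x

def unitTiling (n : ℕ) : Finset Tile := (squareRegion n).image fun q => (q, 1)

section Cells

variable {a p q r : ℤ × ℤ} {k s n : ℕ}

lemma mem_sqCells :
    a ∈ sqCells p k ↔ p.1 ≤ a.1 ∧ a.1 < p.1 + k ∧ p.2 ≤ a.2 ∧ a.2 < p.2 + k := by
  simp only [sqCells, mem_image, mem_product, mem_range, Prod.exists]
  constructor
  · rintro ⟨i, j, ⟨hi, hj⟩, rfl⟩
    omega
  · rintro ⟨h1, h2, h3, h4⟩
    refine ⟨(a.1 - p.1).toNat, (a.2 - p.2).toNat, ⟨by omega, by omega⟩, ?_⟩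
    ext <;> simp only [Int.ofNat_toNat] <;> omega

lemma self_mem_sqCells (hk : 0 < k) : p ∈ sqCells p k := by
  rw [mem_sqCells]; omega

lemma sqCells_one : sqCells p 1 = {p} := by
  ext a
  rw [mem_sqCells, mem_singleton]
  constructor
  · intro h; ext <;> omega
  · rintro rfl; omega

lemma card_sqCells_le : (sqCells p k).card ≤ k ^ 2 :=
  card_image_le.trans (by simp [sq])

lemma card_squareRegion_le : (squareRegion n).card ≤ n ^ 2 :=
  card_image_le.trans (by simp [sq])

lemma mem_sqCells_of_not_disjoint (hs : 1 ≤ s) (h : ¬ Disjoint (sqCells r s) (sqCells p s)) :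
    r ∈ sqCells (p.1 - (s - 1 : ℕ), p.2 - (s - 1 : ℕ)) (2 * s - 1) := by
  obtain ⟨a, ha1, ha2⟩ := Finset.not_disjoint_iff.mp h
  rw [mem_sqCells] at ha1 ha2 ⊢
  push_cast [Nat.cast_sub hs, Nat.cast_sub (show 1 ≤ 2 * s by omega)]
  omega

lemma mem_unitTiles {t : Tile} : t ∈ unitTiles p s ↔ t.2 = 1 ∧ t.1 ∈ sqCells p s := by
  simp only [unitTiles, mem_image]
  constructor
  · rintro ⟨q, hq, rfl⟩; exact ⟨rfl, hq⟩
  · rintro ⟨h1, h2⟩; exact ⟨t.1, h2, by rw [← h1]⟩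

lemma sqCells_of_mem_unitTiles {t : Tile} (ht : t ∈ unitTiles p s) : sqCells t.1 t.2 = {t.1} := by
  rw [(mem_unitTiles.mp ht).1, sqCells_one]

lemma big_notMem_unitTiles (hs : 2 ≤ s) : ((q, s) : Tile) ∉ unitTiles p s := by
  rw [mem_unitTiles]; rintro ⟨h, -⟩; simp only at h; omega

lemma mem_bigPositions {x : Finset Tile} : q ∈ bigPositions s x ↔ (q, s) ∈ x := by
  simp only [bigPositions, mem_image, mem_filter]
  constructor
  · rintro ⟨t, ⟨ht, rfl⟩, rfl⟩; exact ht
  · intro h; exact ⟨(q, s), ⟨h, rfl⟩, rfl⟩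

lemma bigCount_eq_card_bigPositions {x : Finset Tile} : bigCount s x = (bigPositions s x).card := by
  rw [bigCount, bigPositions, card_image_of_injOn]
  intro t ht t' ht' h
  simp only [mem_coe, mem_filter] at ht ht'
  exact Prod.ext h (ht.2.trans ht'.2.symm)

lemma mem_freePositions {x : Finset Tile} :
    r ∈ freePositions s n x ↔ r ∈ squareRegion n ∧ unitTiles r s ⊆ x := by
  simp [freePositions]

end Cells

namespace IsTiling

variable {s n : ℕ} {R : Finset (ℤ × ℤ)} {x : Finset Tile} {p q r : ℤ × ℤ}

lemma sqCells_subset (hx : IsTiling 1 s R x) {t : Tile} (ht : t ∈ x) : sqCells t.1 t.2 ⊆ R :=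
  fun _ ha => hx.2.2 ▸ mem_biUnion.mpr ⟨t, ht, ha⟩

lemma unit_notMem (hs : 2 ≤ s) (hx : IsTiling 1 s R x) (hp : (p, s) ∈ x)
    (hq : q ∈ sqCells p s) : (q, 1) ∉ x := by
  intro hq1
  have hne : ((q, 1) : Tile) ≠ (p, s) := by
    intro h; simp only [Prod.mk.injEq] at h; omega
  exact disjoint_left.mp (hx.2.1 _ hq1 _ hp hne) (by simp [sqCells_one]) hq

lemma notMem_unitTiles (hs : 2 ≤ s) (hx : IsTiling 1 s R x) (hp : (p, s) ∈ x) {t : Tile}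
    (ht : t ∈ x) : t ∉ unitTiles p s := by
  intro htu
  obtain ⟨h1, h2⟩ := mem_unitTiles.mp htu
  exact hx.unit_notMem hs hp h2 (by rwa [← h1])

lemma big_notMem_of_mem_freePositions (hs : 2 ≤ s) (hx : IsTiling 1 s (squareRegion n) x)
    (hr : r ∈ freePositions s n x) : (r, s) ∉ x := fun hrs =>
  hx.unit_notMem hs hrs (self_mem_sqCells (by omega))
    ((mem_freePositions.mp hr).2 (mem_unitTiles.mpr ⟨rfl, self_mem_sqCells (by omega)⟩))

lemma bigPositions_subset (hs : 2 ≤ s) (hx : IsTiling 1 s R x) : bigPositions s x ⊆ R :=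
  fun _ ha => hx.sqCells_subset (mem_bigPositions.mp ha) (self_mem_sqCells (by omega))

lemma disjoint_of_mem_freePositions (hx : IsTiling 1 s (squareRegion n) x)
    (hr : r ∈ freePositions s n x) {t : Tile} (ht : t ∈ x) (htu : t ∉ unitTiles r s) :
    Disjoint (sqCells t.1 t.2) (sqCells r s) := by
  rw [disjoint_left]
  intro a hat har
  have hau : ((a, 1) : Tile) ∈ unitTiles r s := mem_unitTiles.mpr ⟨rfl, har⟩
  have hne : t ≠ (a, 1) := by rintro rfl; exact htu hau
  exact disjoint_left.mp (hx.2.1 t ht _ ((mem_freePositions.mp hr).2 hau) hne) hat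
    (by simp [sqCells_one])

lemma snd_eq_one_of_bigCount_eq_zero (hx : IsTiling 1 s R x) (h0 : bigCount s x = 0) {t : Tile}
    (ht : t ∈ x) : t.2 = 1 :=
  (hx.1 t ht).resolve_right (filter_eq_empty_iff.mp (card_eq_zero.mp h0) ht)

end IsTiling

section SplitMerge

variable {s n : ℕ} {R : Finset (ℤ × ℤ)} {x : Finset Tile} {p q r : ℤ × ℤ}

lemma mem_splitAt {t : Tile} : t ∈ splitAt s x p ↔ (t ∈ x ∧ t ≠ (p, s)) ∨ t ∈ unitTiles p s := by
  simp [splitAt, and_comm]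

lemma mem_mergeAt {t : Tile} : t ∈ mergeAt s x r ↔ (t ∈ x ∧ t ∉ unitTiles r s) ∨ t = (r, s) := by
  simp [mergeAt, or_comm]

lemma big_mem_mergeAt : ((r, s) : Tile) ∈ mergeAt s x r := mem_mergeAt.mpr (Or.inr rfl)

lemma big_notMem_splitAt (hs : 2 ≤ s) : ((p, s) : Tile) ∉ splitAt s x p := by
  rw [mem_splitAt]
  rintro (⟨-, h⟩ | h)
  · exact h rfl
  · exact big_notMem_unitTiles hs h

lemma centralFlipTo_splitAt (hp : (p, s) ∈ x) : centralFlipTo s x (splitAt s x p) := ⟨p, hp, rfl⟩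

lemma IsTiling.splitAt (hx : IsTiling 1 s R x) (hp : (p, s) ∈ x) :
    IsTiling 1 s R (splitAt s x p) := by
  obtain ⟨hsz, hdj, hun⟩ := hx
  refine ⟨fun t ht => ?_, fun t ht t' ht' hne => ?_, ?_⟩
  · rcases mem_splitAt.mp ht with ⟨h, -⟩ | h
    · exact hsz t h
    · exact Or.inl (mem_unitTiles.mp h).1
  · rcases mem_splitAt.mp ht with ⟨h1, h1'⟩ | h1 <;>
      rcases mem_splitAt.mp ht' with ⟨h2, h2'⟩ | h2
    · exact hdj t h1 t' h2 hne
    · rw [sqCells_of_mem_unitTiles h2, disjoint_singleton_right]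
      exact disjoint_right.mp (hdj t h1 _ hp h1') (mem_unitTiles.mp h2).2
    · rw [sqCells_of_mem_unitTiles h1, disjoint_singleton_left]
      exact disjoint_right.mp (hdj t' h2 _ hp h2') (mem_unitTiles.mp h1).2
    · rw [sqCells_of_mem_unitTiles h1, sqCells_of_mem_unitTiles h2, disjoint_singleton]
      exact fun h => hne (Prod.ext h ((mem_unitTiles.mp h1).1.trans (mem_unitTiles.mp h2).1.symm))
  · ext a
    simp only [mem_biUnion, ← hun]
    constructor
    · rintro ⟨t, ht, hat⟩
      rcases mem_splitAt.mp ht with ⟨h, -⟩ | h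
      · exact ⟨t, h, hat⟩
      · rw [sqCells_of_mem_unitTiles h, mem_singleton] at hat
        exact ⟨(p, s), hp, hat ▸ (mem_unitTiles.mp h).2⟩
    · rintro ⟨t, ht, hat⟩
      by_cases htp : t = (p, s)
      · subst htp
        exact ⟨(a, 1), mem_splitAt.mpr (Or.inr (mem_unitTiles.mpr ⟨rfl, hat⟩)),
          by simp [sqCells_one]⟩
      · exact ⟨t, mem_splitAt.mpr (Or.inl ⟨ht, htp⟩), hat⟩

lemma IsTiling.mergeAt (hx : IsTiling 1 s (squareRegion n) x) (hr : r ∈ freePositions s n x) :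
    IsTiling 1 s (squareRegion n) (mergeAt s x r) := by
  have hU := (mem_freePositions.mp hr).2
  refine ⟨fun t ht => ?_, fun t ht t' ht' hne => ?_, ?_⟩
  · rcases mem_mergeAt.mp ht with ⟨h, -⟩ | rfl
    · exact hx.1 t h
    · exact Or.inr rfl
  · rcases mem_mergeAt.mp ht with ⟨h1, h1'⟩ | rfl <;>
      rcases mem_mergeAt.mp ht' with ⟨h2, h2'⟩ | rfl
    · exact hx.2.1 t h1 t' h2 hne
    · exact hx.disjoint_of_mem_freePositions hr h1 h1'
    · exact (hx.disjoint_of_mem_freePositions hr h2 h2').symm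
    · exact absurd rfl hne
  · ext a
    simp only [mem_biUnion, ← hx.2.2]
    constructor
    · rintro ⟨t, ht, hat⟩
      rcases mem_mergeAt.mp ht with ⟨h, -⟩ | rfl
      · exact ⟨t, h, hat⟩
      · exact ⟨(a, 1), hU (mem_unitTiles.mpr ⟨rfl, hat⟩), by simp [sqCells_one]⟩
    · rintro ⟨t, ht, hat⟩
      by_cases htu : t ∈ unitTiles r s
      · rw [sqCells_of_mem_unitTiles htu, mem_singleton] at hat
        exact ⟨(r, s), big_mem_mergeAt, hat ▸ (mem_unitTiles.mp htu).2⟩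
      · exact ⟨t, mem_mergeAt.mpr (Or.inl ⟨ht, htu⟩), hat⟩

lemma splitAt_mergeAt (hs : 2 ≤ s) (hx : IsTiling 1 s (squareRegion n) x)
    (hr : r ∈ freePositions s n x) : splitAt s (mergeAt s x r) r = x := by
  have hrs := hx.big_notMem_of_mem_freePositions hs hr
  have hU := (mem_freePositions.mp hr).2
  ext t
  rw [mem_splitAt, mem_mergeAt]
  constructor
  · rintro (⟨⟨h1, -⟩ | h1, h2⟩ | h)
    · exact h1
    · exact absurd h1 h2
    · exact hU h
  · intro ht
    by_cases htu : t ∈ unitTiles r s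
    · exact Or.inr htu
    · exact Or.inl ⟨Or.inl ⟨ht, htu⟩, fun h => hrs (h ▸ ht)⟩

lemma mergeAt_splitAt (hs : 2 ≤ s) (hx : IsTiling 1 s R x) (hp : (p, s) ∈ x) :
    mergeAt s (splitAt s x p) p = x := by
  ext t
  rw [mem_mergeAt, mem_splitAt]
  constructor
  · rintro (⟨⟨h1, -⟩ | h1, h2⟩ | rfl)
    · exact h1
    · exact absurd h1 h2
    · exact hp
  · intro ht
    by_cases htp : t = (p, s)
    · exact Or.inr htp
    · exact Or.inl ⟨Or.inl ⟨ht, htp⟩, hx.notMem_unitTiles hs hp ht⟩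

lemma centralFlipTo_mergeAt (hs : 2 ≤ s) (hx : IsTiling 1 s (squareRegion n) x)
    (hr : r ∈ freePositions s n x) : centralFlipTo s (mergeAt s x r) x :=
  ⟨r, big_mem_mergeAt, (splitAt_mergeAt hs hx hr).symm⟩

lemma exists_eq_mergeAt_of_centralFlipTo (hs : 2 ≤ s) {z : Finset Tile}
    (hz : IsTiling 1 s (squareRegion n) z) (hflip : centralFlipTo s z x) :
    ∃ r ∈ freePositions s n x, z = mergeAt s x r := by
  obtain ⟨r, hrz, rfl⟩ := hflip
  refine ⟨r, mem_freePositions.mpr ⟨?_, fun t ht => mem_splitAt.mpr (Or.inr ht)⟩,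
    (mergeAt_splitAt hs hz hrz).symm⟩
  exact hz.sqCells_subset hrz (self_mem_sqCells (by omega))

lemma bigPositions_splitAt (hs : 2 ≤ s) :
    bigPositions s (splitAt s x p) = (bigPositions s x).erase p := by
  ext a
  rw [mem_bigPositions, mem_erase, mem_splitAt, mem_bigPositions]
  constructor
  · rintro (⟨h1, h2⟩ | h)
    · exact ⟨fun h => h2 (by rw [h]), h1⟩
    · exact absurd h (big_notMem_unitTiles hs)
  · rintro ⟨h1, h2⟩
    exact Or.inl ⟨h2, fun h => h1 (congrArg Prod.fst h)⟩

lemma bigCount_splitAt (hs : 2 ≤ s) (hp : (p, s) ∈ x) :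
    bigCount s (splitAt s x p) = bigCount s x - 1 := by
  rw [bigCount_eq_card_bigPositions, bigCount_eq_card_bigPositions, bigPositions_splitAt hs]
  exact card_erase_of_mem (mem_bigPositions.mpr hp)

lemma splitAt_comm (hs : 2 ≤ s) : splitAt s (splitAt s x p) q = splitAt s (splitAt s x q) p := by
  have key : ∀ {p q : ℤ × ℤ} {t : Tile}, t ∈ splitAt s (splitAt s x p) q ↔
      (t ∈ x ∧ t ≠ (p, s) ∧ t ≠ (q, s)) ∨ t ∈ unitTiles p s ∨ t ∈ unitTiles q s := by
    intro p q t
    simp only [mem_splitAt]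
    have : t ∈ unitTiles p s → t ≠ (q, s) := by rintro h rfl; exact big_notMem_unitTiles hs h
    tauto
  ext t
  rw [key, key]
  tauto

lemma mergeAt_splitAt_comm (hs : 2 ≤ s) (hx : IsTiling 1 s (squareRegion n) x)
    (hp : (p, s) ∈ x) (hr : r ∈ freePositions s n x) :
    mergeAt s (splitAt s x p) r = splitAt s (mergeAt s x r) p := by
  have hrp : r ≠ p := by
    rintro rfl
    exact hx.big_notMem_of_mem_freePositions hs hr hp
  have hdisj : ∀ t : Tile, t ∈ unitTiles p s → t ∉ unitTiles r s := fun t h1 h2 =>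
    disjoint_left.mp (hx.disjoint_of_mem_freePositions hr hp (big_notMem_unitTiles hs))
      (mem_unitTiles.mp h1).2 (mem_unitTiles.mp h2).2
  have hne : ((r, s) : Tile) ≠ (p, s) := fun h => hrp (congrArg Prod.fst h)
  ext t
  simp only [mem_mergeAt, mem_splitAt]
  constructor
  · rintro (⟨⟨h1, h2⟩ | h1, h3⟩ | rfl)
    · exact Or.inl ⟨Or.inl ⟨h1, h3⟩, h2⟩
    · exact Or.inr h1
    · exact Or.inl ⟨Or.inr rfl, hne⟩
  · rintro (⟨⟨h1, h2⟩ | rfl, h3⟩ | h)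
    · exact Or.inl ⟨Or.inl ⟨h1, h3⟩, h2⟩
    · exact Or.inr rfl
    · exact Or.inl ⟨Or.inr h, hdisj t h⟩

lemma insert_subset_freePositions_splitAt (hs : 2 ≤ s) (hx : IsTiling 1 s (squareRegion n) x)
    (hp : (p, s) ∈ x) : insert p (freePositions s n x) ⊆ freePositions s n (splitAt s x p) := by
  intro r hr
  rw [mem_freePositions]
  rcases mem_insert.mp hr with rfl | hr
  · exact ⟨hx.sqCells_subset hp (self_mem_sqCells (by omega)),
      fun t ht => mem_splitAt.mpr (Or.inr ht)⟩
  · rw [mem_freePositions] at hr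
    exact ⟨hr.1, fun t ht => mem_splitAt.mpr
      (Or.inl ⟨hr.2 ht, fun h => big_notMem_unitTiles hs (h ▸ ht)⟩)⟩

/-- A square freed by splitting the big tile at `p` must overlap `S(p,s)`, so its corner lies in
the (2s-1)×(2s-1) box of corners around `p`, and differs from `p`. -/
lemma card_freePositions_splitAt_sdiff_add_one_le (hs : 2 ≤ s) :
    (freePositions s n (splitAt s x p) \ insert p (freePositions s n x)).card + 1 ≤
      (2 * s - 1) ^ 2 := by
  set box := sqCells (p.1 - (s - 1 : ℕ), p.2 - (s - 1 : ℕ)) (2 * s - 1)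
  have hsub : freePositions s n (splitAt s x p) \ insert p (freePositions s n x) ⊆ box.erase p := by
    intro r hr
    obtain ⟨hr1, hr2⟩ := mem_sdiff.mp hr
    rw [mem_insert, not_or] at hr2
    refine mem_erase.mpr ⟨hr2.1, mem_sqCells_of_not_disjoint (by omega) fun hdisj => hr2.2 ?_⟩
    rw [mem_freePositions] at hr1 ⊢
    refine ⟨hr1.1, fun t ht => ?_⟩
    rcases mem_splitAt.mp (hr1.2 ht) with ⟨h, -⟩ | h
    · exact h
    · exact absurd (mem_unitTiles.mp h).2 (disjoint_left.mp hdisj (mem_unitTiles.mp ht).2)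
  have hp_box : p ∈ box := by rw [mem_sqCells]; omega
  calc _ ≤ (box.erase p).card + 1 := by gcongr
    _ = box.card := card_erase_add_one hp_box
    _ ≤ (2 * s - 1) ^ 2 := card_sqCells_le

lemma isTiling_unitTiling : IsTiling 1 s (squareRegion n) (unitTiling n) := by
  refine ⟨?_, ?_, ?_⟩
  · rintro t ht
    obtain ⟨a, -, rfl⟩ := mem_image.mp ht
    exact Or.inl rfl
  · intro t ht t' ht' hne
    obtain ⟨a, -, rfl⟩ := mem_image.mp ht
    obtain ⟨a', -, rfl⟩ := mem_image.mp ht'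
    rw [sqCells_one, sqCells_one, disjoint_singleton]
    exact fun h => hne (by simp only at h; rw [h])
  · rw [unitTiling, image_biUnion]
    simp only [sqCells_one, biUnion_singleton_eq_self]

lemma IsTiling.eq_unitTiling (hx : IsTiling 1 s (squareRegion n) x) (h0 : bigCount s x = 0) :
    x = unitTiling n := by
  ext t
  constructor
  · intro ht
    have h1 := hx.snd_eq_one_of_bigCount_eq_zero h0 ht
    have hcell : t.1 ∈ sqCells t.1 t.2 := by rw [h1, sqCells_one]; exact mem_singleton_self _
    exact mem_image.mpr ⟨t.1, hx.sqCells_subset ht hcell, by rw [← h1]⟩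
  · intro ht
    obtain ⟨a, ha, rfl⟩ := mem_image.mp ht
    rw [← hx.2.2] at ha
    obtain ⟨u, hu, hau⟩ := mem_biUnion.mp ha
    have h1 := hx.snd_eq_one_of_bigCount_eq_zero h0 hu
    rw [h1, sqCells_one, mem_singleton] at hau
    have hua : u = (a, 1) := Prod.ext hau.symm h1
    exact hua ▸ hu

end SplitMerge

section MarkovOperator

variable {X : Type*} {Ω : Finset X} {P : X → X → ℝ}

noncomputable def markovOp (Ω : Finset X) (P : X → X → ℝ) (f : X → ℝ) (x : X) : ℝ :=
  ∑ z ∈ Ω, P x z * f z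

lemma sum_matPow_mul_eq_iterate [DecidableEq X] {x : X} (hx : x ∈ Ω) (t : ℕ) (f : X → ℝ) :
    ∑ y ∈ Ω, matPow Ω P t x y * f y = (markovOp Ω P)^[t] f x := by
  induction t generalizing f with
  | zero => simp [matPow, hx]
  | succ t ih =>
    rw [Function.iterate_succ_apply, ← ih]
    simp only [matPow, markovOp, sum_mul, mul_sum, mul_assoc]
    exact sum_comm

lemma sum_mul_markovOp_of_detailed_balance {w : X → ℝ} (hrow : ∀ x ∈ Ω, ∑ z ∈ Ω, P x z = 1)
    (hdb : ∀ u ∈ Ω, ∀ v ∈ Ω, w u * P u v = w v * P v u) (f : X → ℝ) :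
    ∑ u ∈ Ω, w u * markovOp Ω P f u = ∑ u ∈ Ω, w u * f u := by
  calc ∑ u ∈ Ω, w u * markovOp Ω P f u = ∑ v ∈ Ω, ∑ u ∈ Ω, w u * P u v * f v := by
        simp only [markovOp, mul_sum, mul_assoc]
        exact sum_comm
    _ = ∑ v ∈ Ω, w v * f v * ∑ u ∈ Ω, P v u := by
        refine sum_congr rfl fun v hv => ?_
        rw [mul_sum]
        exact sum_congr rfl fun u hu => by rw [hdb u hu v hv]; ring
    _ = ∑ u ∈ Ω, w u * f u := sum_congr rfl fun v hv => by rw [hrow v hv, mul_one]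

lemma sum_mul_markovOp_iterate {w : X → ℝ}
    (hstat : ∀ f, ∑ u ∈ Ω, w u * markovOp Ω P f u = ∑ u ∈ Ω, w u * f u) (t : ℕ) (f : X → ℝ) :
    ∑ u ∈ Ω, w u * (markovOp Ω P)^[t] f u = ∑ u ∈ Ω, w u * f u := by
  induction t generalizing f with
  | zero => rfl
  | succ t ih => rw [Function.iterate_succ_apply, ih, hstat]

/-- Test `P^t(x, ·) - π` against its own sign, a function with values in `[-1, 1]`. -/
lemma dTV_matPow_le [DecidableEq X] {π : X → ℝ} (hπ0 : ∀ y ∈ Ω, 0 ≤ π y) (hπ1 : ∑ y ∈ Ω, π y = 1)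
    (hstat : ∀ f, ∑ y ∈ Ω, π y * markovOp Ω P f y = ∑ y ∈ Ω, π y * f y) {x : X} (hx : x ∈ Ω)
    {t : ℕ} {δ : ℝ}
    (hosc : ∀ f : X → ℝ, (∀ y, |f y| ≤ 1) → ∀ y ∈ Ω,
      (markovOp Ω P)^[t] f x - (markovOp Ω P)^[t] f y ≤ δ) :
    dTV Ω (fun y => matPow Ω P t x y) π ≤ δ / 2 := by
  set μ := fun y => matPow Ω P t x y
  set f : X → ℝ := fun y => if π y ≤ μ y then 1 else -1
  set g := (markovOp Ω P)^[t] f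
  have hf : ∀ y, |f y| ≤ 1 := fun y => by simp only [f]; split_ifs <;> norm_num
  have habs : ∀ y, |μ y - π y| = μ y * f y - π y * f y := fun y => by
    simp only [f]
    split_ifs with h
    · rw [abs_of_nonneg (sub_nonneg.mpr h)]; ring
    · rw [abs_of_neg (sub_neg.mpr (not_le.mp h))]; ring
  have hsum : ∑ y ∈ Ω, |μ y - π y| = ∑ y ∈ Ω, π y * (g x - g y) := by
    simp only [habs, sum_sub_distrib, mul_sub, ← sum_mul, hπ1, one_mul]
    rw [sum_matPow_mul_eq_iterate hx, sum_mul_markovOp_iterate hstat]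
  have hle : ∑ y ∈ Ω, π y * (g x - g y) ≤ δ :=
    calc ∑ y ∈ Ω, π y * (g x - g y) ≤ ∑ y ∈ Ω, π y * δ :=
          sum_le_sum fun y hy => mul_le_mul_of_nonneg_left (hosc f hf y hy) (hπ0 y hy)
      _ = δ := by rw [← sum_mul, hπ1, one_mul]
  rw [dTV, hsum]
  linarith

lemma mixingTime_le [DecidableEq X] {π : X → ℝ} {ε : ℝ} {t₀ : ℕ}
    (h : ∀ x ∈ Ω, ∀ t ≥ t₀, dTV Ω (fun y => matPow Ω P t x y) π ≤ ε) :
    mixingTime Ω P π ε ≤ t₀ :=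
  Finset.sup_le fun x hx => Nat.sInf_le (h x hx)

end MarkovOperator

lemma abs_sum_sub_le_card_mul {ι : Type*} {S : Finset ι} {F G : ι → ℝ} {L : ℝ}
    (h : ∀ a ∈ S, |F a - G a| ≤ L) : |∑ a ∈ S, (F a - G a)| ≤ S.card * L :=
  (abs_sum_le_sum_abs _ _).trans ((sum_le_card_nsmul _ _ _ h).trans_eq (nsmul_eq_mul _ _))

/-- Path coupling, in dual form. -/
lemma abs_iterate_sub_le {X : Type*} {R : X → X → Prop} {Q : (X → ℝ) → X → ℝ} {ρ : ℝ}
    (hρ : 0 ≤ ρ)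
    (hQ : ∀ f L, 0 ≤ L → (∀ u v, R u v → |f u - f v| ≤ L) →
      ∀ u v, R u v → |Q f u - Q f v| ≤ ρ * L)
    {f : X → ℝ} {L : ℝ} (hL : 0 ≤ L) (hf : ∀ u v, R u v → |f u - f v| ≤ L) (t : ℕ) :
    ∀ u v, R u v → |Q^[t] f u - Q^[t] f v| ≤ ρ ^ t * L := by
  induction t with
  | zero => simpa using hf
  | succ t ih =>
    intro u v huv
    rw [Function.iterate_succ_apply', pow_succ', mul_assoc]
    exact hQ _ _ (by positivity) ih u v huv

structure IsFlipChain (s n : ℕ) (lam : ℝ) (Ω : Finset (Finset Tile))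
    (P : Finset Tile → Finset Tile → ℝ) : Prop where
  mem_iff : ∀ T, T ∈ Ω ↔ IsTiling 1 s (squareRegion n) T
  split : ∀ T ∈ Ω, ∀ T' ∈ Ω, centralFlipTo s T T' → P T T' = 1 / ((n : ℝ) ^ 2 * (lam + 1))
  merge : ∀ T ∈ Ω, ∀ T' ∈ Ω, centralFlipTo s T' T → P T T' = lam / ((n : ℝ) ^ 2 * (lam + 1))
  eq_zero : ∀ T ∈ Ω, ∀ T' ∈ Ω, T ≠ T' → ¬ CentralFlip s T T' → P T T' = 0
  diag : ∀ T ∈ Ω, P T T = 1 - ∑ T' ∈ Ω.erase T, P T T'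

def flipNeighbors (s n : ℕ) (x : Finset Tile) : Finset (Finset Tile) :=
  (bigPositions s x).image (splitAt s x) ∪ (freePositions s n x).image (mergeAt s x)

section Neighbors

variable {s n : ℕ} {x : Finset Tile} {p r : ℤ × ℤ}

lemma splitAt_injOn (hs : 2 ≤ s) : Set.InjOn (splitAt s x) (bigPositions s x) := by
  intro a ha b hb hab
  by_contra hne
  have : ((b, s) : Tile) ∈ splitAt s x a :=
    mem_splitAt.mpr (Or.inl ⟨mem_bigPositions.mp hb, fun h => hne (congrArg Prod.fst h).symm⟩)
  exact big_notMem_splitAt hs (hab ▸ this)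

lemma mergeAt_injOn (hs : 2 ≤ s) (hx : IsTiling 1 s (squareRegion n) x) :
    Set.InjOn (mergeAt s x) (freePositions s n x) := by
  intro a ha b hb hab
  rcases mem_mergeAt.mp (hab ▸ big_mem_mergeAt : ((a, s) : Tile) ∈ mergeAt s x b) with ⟨h, -⟩ | h
  · exact absurd h (hx.big_notMem_of_mem_freePositions hs ha)
  · exact congrArg Prod.fst h

lemma splitAt_ne_mergeAt (hs : 2 ≤ s) (hx : IsTiling 1 s (squareRegion n) x)
    (hr : r ∈ freePositions s n x) : splitAt s x p ≠ mergeAt s x r := by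
  intro h
  rcases mem_splitAt.mp (h ▸ big_mem_mergeAt : ((r, s) : Tile) ∈ splitAt s x p) with ⟨h, -⟩ | h
  · exact hx.big_notMem_of_mem_freePositions hs hr h
  · exact big_notMem_unitTiles hs h

lemma splitAt_ne_self (hs : 2 ≤ s) (hp : (p, s) ∈ x) : splitAt s x p ≠ x :=
  fun h => big_notMem_splitAt hs (h ▸ hp)

lemma mergeAt_ne_self (hs : 2 ≤ s) (hx : IsTiling 1 s (squareRegion n) x)
    (hr : r ∈ freePositions s n x) : mergeAt s x r ≠ x :=
  fun h => hx.big_notMem_of_mem_freePositions hs hr (h ▸ big_mem_mergeAt)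

lemma centralFlipTo_splitAt_splitAt (hs : 2 ≤ s) (hp : (p, s) ∈ x) {a : ℤ × ℤ} (hap : a ≠ p) :
    centralFlipTo s (splitAt s x a) (splitAt s (splitAt s x p) a) :=
  ⟨p, mem_splitAt.mpr (Or.inl ⟨hp, fun h => hap (congrArg Prod.fst h).symm⟩), splitAt_comm hs⟩

lemma centralFlipTo_mergeAt_mergeAt (hs : 2 ≤ s) (hx : IsTiling 1 s (squareRegion n) x)
    (hp : (p, s) ∈ x) (hr : r ∈ freePositions s n x) :
    centralFlipTo s (mergeAt s x r) (mergeAt s (splitAt s x p) r) :=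
  ⟨p, mem_mergeAt.mpr (Or.inl ⟨hp, big_notMem_unitTiles hs⟩),
    mergeAt_splitAt_comm hs hx hp hr⟩

end Neighbors

noncomputable def flipGap (s : ℕ) (lam : ℝ) : ℝ := (1 - lam * ((2 * s - 1) ^ 2 - 2)) / (lam + 1)

namespace IsFlipChain

variable {s n : ℕ} {lam : ℝ} {Ω : Finset (Finset Tile)} {P : Finset Tile → Finset Tile → ℝ}
  {x : Finset Tile} {p : ℤ × ℤ}

lemma flipNeighbors_subset (hs : 2 ≤ s) (hP : IsFlipChain s n lam Ω P) (hx : x ∈ Ω) :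
    flipNeighbors s n x ⊆ Ω.erase x := by
  have hxt := (hP.mem_iff x).mp hx
  intro z hz
  rcases mem_union.mp hz with hz | hz
  · obtain ⟨a, ha, rfl⟩ := mem_image.mp hz
    rw [mem_bigPositions] at ha
    exact mem_erase.mpr ⟨splitAt_ne_self hs ha, (hP.mem_iff _).mpr (hxt.splitAt ha)⟩
  · obtain ⟨a, ha, rfl⟩ := mem_image.mp hz
    exact mem_erase.mpr ⟨mergeAt_ne_self hs hxt ha, (hP.mem_iff _).mpr (hxt.mergeAt ha)⟩

lemma mem_flipNeighbors (hs : 2 ≤ s) (hP : IsFlipChain s n lam Ω P) {z : Finset Tile}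
    (hz : z ∈ Ω) (hf : CentralFlip s x z) : z ∈ flipNeighbors s n x := by
  rcases hf with ⟨a, ha, rfl⟩ | hf
  · exact mem_union_left _ (mem_image.mpr ⟨a, mem_bigPositions.mpr ha, rfl⟩)
  · obtain ⟨a, ha, rfl⟩ := exists_eq_mergeAt_of_centralFlipTo hs ((hP.mem_iff z).mp hz) hf
    exact mem_union_right _ (mem_image.mpr ⟨a, ha, rfl⟩)

lemma sum_erase_mul_eq (hs : 2 ≤ s) (hP : IsFlipChain s n lam Ω P) (hx : x ∈ Ω)
    (g : Finset Tile → ℝ) :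
    ∑ z ∈ Ω.erase x, P x z * g z =
      1 / ((n : ℝ) ^ 2 * (lam + 1)) * ∑ a ∈ bigPositions s x, g (splitAt s x a) +
      lam / ((n : ℝ) ^ 2 * (lam + 1)) * ∑ a ∈ freePositions s n x, g (mergeAt s x a) := by
  have hxt := (hP.mem_iff x).mp hx
  have hdisj : Disjoint ((bigPositions s x).image (splitAt s x))
      ((freePositions s n x).image (mergeAt s x)) := by
    simp only [disjoint_left, mem_image]
    rintro _ ⟨a, -, rfl⟩ ⟨b, hb, h⟩
    exact splitAt_ne_mergeAt hs hxt hb h.symm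
  rw [← sum_subset (hP.flipNeighbors_subset hs hx) fun z hz hzn => ?_]
  · rw [flipNeighbors, sum_union hdisj, sum_image (splitAt_injOn hs),
      sum_image (mergeAt_injOn hs hxt), mul_sum, mul_sum]
    congr 1
    · refine sum_congr rfl fun a ha => ?_
      rw [mem_bigPositions] at ha
      rw [hP.split x hx _ ((hP.mem_iff _).mpr (hxt.splitAt ha)) (centralFlipTo_splitAt ha)]
    · refine sum_congr rfl fun a ha => ?_
      rw [hP.merge x hx _ ((hP.mem_iff _).mpr (hxt.mergeAt ha)) (centralFlipTo_mergeAt hs hxt ha)]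
  · obtain ⟨hzx, hz⟩ := mem_erase.mp hz
    rw [hP.eq_zero x hx z hz (Ne.symm hzx) fun hf => hzn (hP.mem_flipNeighbors hs hz hf), zero_mul]

lemma markovOp_eq (hs : 2 ≤ s) (hP : IsFlipChain s n lam Ω P) (hx : x ∈ Ω)
    (f : Finset Tile → ℝ) :
    markovOp Ω P f x =
      (1 - (bigPositions s x).card * (1 / ((n : ℝ) ^ 2 * (lam + 1)))
        - (freePositions s n x).card * (lam / ((n : ℝ) ^ 2 * (lam + 1)))) * f x +
      1 / ((n : ℝ) ^ 2 * (lam + 1)) * ∑ a ∈ bigPositions s x, f (splitAt s x a) +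
      lam / ((n : ℝ) ^ 2 * (lam + 1)) * ∑ a ∈ freePositions s n x, f (mergeAt s x a) := by
  have hrow := hP.sum_erase_mul_eq hs hx fun _ => 1
  simp only [mul_one, sum_const, nsmul_eq_mul] at hrow
  rw [markovOp, ← add_sum_erase _ _ hx, hP.sum_erase_mul_eq hs hx f, hP.diag x hx, hrow]
  ring

lemma sum_row_eq_one (hP : IsFlipChain s n lam Ω P) (hx : x ∈ Ω) : ∑ z ∈ Ω, P x z = 1 := by
  rw [← add_sum_erase _ _ hx, hP.diag x hx]
  ring

lemma detailed_balance (hs : 2 ≤ s) (hP : IsFlipChain s n lam Ω P) {u v : Finset Tile}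
    (hu : u ∈ Ω) (hv : v ∈ Ω) : lam ^ bigCount s u * P u v = lam ^ bigCount s v * P v u := by
  have hflip : ∀ {w w'}, w ∈ Ω → w' ∈ Ω → centralFlipTo s w w' →
      lam ^ bigCount s w * P w w' = lam ^ bigCount s w' * P w' w := by
    intro w w' hw hw' hf
    obtain ⟨a, ha, heq⟩ := id hf
    have hpos : 0 < bigCount s w :=
      bigCount_eq_card_bigPositions ▸ card_pos.mpr ⟨a, mem_bigPositions.mpr ha⟩
    have hcount : bigCount s w = bigCount s w' + 1 := by
      rw [show w' = splitAt s w a from heq, bigCount_splitAt hs ha]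
      omega
    rw [hP.split w hw w' hw' hf, hP.merge w' hw' w hw hf, hcount, pow_succ]
    ring
  by_cases huv : u = v
  · rw [huv]
  by_cases h₁ : centralFlipTo s u v
  · exact hflip hu hv h₁
  by_cases h₂ : centralFlipTo s v u
  · exact (hflip hv hu h₂).symm
  rw [hP.eq_zero u hu v hv huv (·.elim h₁ h₂), hP.eq_zero v hv u hu (Ne.symm huv) (·.elim h₂ h₁)]
  ring

end IsFlipChain

namespace IsFlipChain

variable {s n : ℕ} {lam : ℝ} {Ω : Finset (Finset Tile)} {P : Finset Tile → Finset Tile → ℝ}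
  {x : Finset Tile} {p : ℤ × ℤ}

lemma markovOp_sub_markovOp_splitAt (hs : 2 ≤ s) (hP : IsFlipChain s n lam Ω P) (hx : x ∈ Ω)
    (hp : (p, s) ∈ x) (f : Finset Tile → ℝ) :
    markovOp Ω P f x - markovOp Ω P f (splitAt s x p) =
      (1 - (bigPositions s x).card * (1 / ((n : ℝ) ^ 2 * (lam + 1)))
        - ((freePositions s n x).card + 1) * (lam / ((n : ℝ) ^ 2 * (lam + 1)))) *
          (f x - f (splitAt s x p)) +
      1 / ((n : ℝ) ^ 2 * (lam + 1)) * ∑ a ∈ (bigPositions s x).erase p,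
        (f (splitAt s x a) - f (splitAt s (splitAt s x p) a)) +
      lam / ((n : ℝ) ^ 2 * (lam + 1)) * ∑ a ∈ freePositions s n x,
        (f (mergeAt s x a) - f (mergeAt s (splitAt s x p) a)) +
      lam / ((n : ℝ) ^ 2 * (lam + 1)) *
        ∑ a ∈ freePositions s n (splitAt s x p) \ insert p (freePositions s n x),
          (f (splitAt s x p) - f (mergeAt s (splitAt s x p) a)) := by
  have hxt := (hP.mem_iff x).mp hx
  have hy : splitAt s x p ∈ Ω := (hP.mem_iff _).mpr (hxt.splitAt hp)
  have hpB : p ∈ bigPositions s x := mem_bigPositions.mpr hp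
  have hpF : p ∉ freePositions s n x := fun h => hxt.big_notMem_of_mem_freePositions hs h hp
  set E := freePositions s n (splitAt s x p) \ insert p (freePositions s n x)
  have hFy : freePositions s n (splitAt s x p) = insert p (freePositions s n x) ∪ E :=
    (union_sdiff_of_subset (insert_subset_freePositions_splitAt hs hxt hp)).symm
  rw [hP.markovOp_eq hs hx, hP.markovOp_eq hs hy, bigPositions_splitAt hs, hFy,
    card_union_of_disjoint disjoint_sdiff, sum_union disjoint_sdiff, card_insert_of_notMem hpF,
    sum_insert hpF, mergeAt_splitAt hs hxt hp, ← add_sum_erase _ _ hpB, ← card_erase_add_one hpB]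
  simp only [sum_sub_distrib, sum_const, nsmul_eq_mul]
  push_cast
  ring

/-- Couple the moves from `u` and from `splitAt s u p`: paired moves stay one flip apart, except
the merges at the at most `(2s-1)² - 1` positions that the split newly frees. -/
lemma abs_markovOp_sub_le (hs : 2 ≤ s) (hlam : 0 ≤ lam) (hP : IsFlipChain s n lam Ω P)
    {f : Finset Tile → ℝ} {L : ℝ} (hL : 0 ≤ L)
    (hf : ∀ u v, u ∈ Ω ∧ v ∈ Ω ∧ centralFlipTo s u v → |f u - f v| ≤ L)
    {u v : Finset Tile} (huv : u ∈ Ω ∧ v ∈ Ω ∧ centralFlipTo s u v) :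
    |markovOp Ω P f u - markovOp Ω P f v| ≤ (1 - flipGap s lam / n ^ 2) * L := by
  obtain ⟨hx, hy, p, hp, hv⟩ := huv
  change v = splitAt s u p at hv
  subst hv
  have hxt := (hP.mem_iff u).mp hx
  have hyt := hxt.splitAt hp
  set y := splitAt s u p
  set B := bigPositions s u
  set F := freePositions s n u
  set E := freePositions s n y \ insert p F
  set d : ℝ := 1 / ((n : ℝ) ^ 2 * (lam + 1))
  set ld : ℝ := lam / ((n : ℝ) ^ 2 * (lam + 1))
  have hpB : p ∈ B := mem_bigPositions.mpr hp
  have hpF : p ∉ F := fun h => hxt.big_notMem_of_mem_freePositions hs h hp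
  have hB : (B.card : ℝ) ≤ n ^ 2 := by
    exact_mod_cast (card_le_card (hxt.bigPositions_subset hs)).trans card_squareRegion_le
  have hF : (F.card : ℝ) + 1 ≤ n ^ 2 := by
    have := card_le_card ((insert_subset_freePositions_splitAt hs hxt hp).trans (filter_subset _ _))
    rw [card_insert_of_notMem hpF] at this
    exact_mod_cast this.trans card_squareRegion_le
  have hE : (E.card : ℝ) + 1 ≤ (2 * s - 1) ^ 2 := by
    have := card_freePositions_splitAt_sdiff_add_one_le hs (n := n) (x := u) (p := p)
    have hcast : ((2 * s - 1 : ℕ) : ℝ) = 2 * s - 1 := by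
      push_cast [Nat.cast_sub (show 1 ≤ 2 * s by omega)]; ring
    rw [← hcast]
    exact_mod_cast this
  have hBerase : ((B.erase p).card : ℝ) = B.card - 1 := by
    rw [← card_erase_add_one hpB]; push_cast; ring
  have hN : (0 : ℝ) < n ^ 2 :=
    lt_of_lt_of_le (by exact_mod_cast card_pos.mpr ⟨p, hpB⟩) hB
  have hn0 : (n : ℝ) ≠ 0 := by rintro h; simp [h] at hN
  have hlam1 : 0 < lam + 1 := by linarith
  have hd : 0 ≤ d := by positivity
  have hld : 0 ≤ ld := by positivity
  have hsum : n ^ 2 * d + n ^ 2 * ld = 1 := by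
    simp only [d, ld]; field_simp; ring
  have hA : 0 ≤ 1 - B.card * d - (F.card + 1) * ld := by
    nlinarith [mul_le_mul_of_nonneg_right hB hd, mul_le_mul_of_nonneg_right hF hld]
  have h₀ : |f u - f y| ≤ L := hf u y ⟨hx, hy, p, hp, rfl⟩
  have h₁ : |∑ a ∈ B.erase p, (f (splitAt s u a) - f (splitAt s y a))| ≤ (B.card - 1) * L := by
    rw [← hBerase]
    refine abs_sum_sub_le_card_mul fun a ha => hf _ _ ⟨?_, ?_, ?_⟩
    · exact (hP.mem_iff _).mpr (hxt.splitAt (mem_bigPositions.mp (mem_of_mem_erase ha)))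
    · refine (hP.mem_iff _).mpr (hyt.splitAt (mem_splitAt.mpr (Or.inl ⟨?_, ?_⟩)))
      · exact mem_bigPositions.mp (mem_of_mem_erase ha)
      · exact fun h => ne_of_mem_erase ha (congrArg Prod.fst h)
    · exact centralFlipTo_splitAt_splitAt hs hp (ne_of_mem_erase ha)
  have h₂ : |∑ a ∈ F, (f (mergeAt s u a) - f (mergeAt s y a))| ≤ F.card * L := by
    refine abs_sum_sub_le_card_mul fun a ha => hf _ _ ⟨(hP.mem_iff _).mpr (hxt.mergeAt ha),
      (hP.mem_iff _).mpr (hyt.mergeAt ?_), centralFlipTo_mergeAt_mergeAt hs hxt hp ha⟩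
    exact insert_subset_freePositions_splitAt hs hxt hp (mem_insert_of_mem ha)
  have h₃ : |∑ a ∈ E, (f y - f (mergeAt s y a))| ≤ E.card * L := by
    refine abs_sum_sub_le_card_mul fun a ha => ?_
    have ha' := (mem_sdiff.mp ha).1
    rw [abs_sub_comm]
    exact hf _ _ ⟨(hP.mem_iff _).mpr (hyt.mergeAt ha'), hy, centralFlipTo_mergeAt hs hyt ha'⟩
  have hgap : flipGap s lam / n ^ 2 = d - ld * ((2 * s - 1) ^ 2 - 2) := by
    simp only [flipGap, d, ld]; field_simp
  rw [hP.markovOp_sub_markovOp_splitAt hs hx hp f, hgap]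
  calc _ ≤ |(1 - B.card * d - (F.card + 1) * ld) * (f u - f y)|
          + |d * ∑ a ∈ B.erase p, (f (splitAt s u a) - f (splitAt s y a))|
          + |ld * ∑ a ∈ F, (f (mergeAt s u a) - f (mergeAt s y a))|
          + |ld * ∑ a ∈ E, (f y - f (mergeAt s y a))| :=
        (abs_add_le _ _).trans (by gcongr; exact abs_add_three _ _ _)
    _ ≤ (1 - B.card * d - (F.card + 1) * ld) * L + d * ((B.card - 1) * L)
          + ld * (F.card * L) + ld * (E.card * L) := by
        simp only [abs_mul, abs_of_nonneg hA, abs_of_nonneg hd, abs_of_nonneg hld]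
        gcongr
    _ ≤ _ := by
        nlinarith [mul_le_mul_of_nonneg_left hE (mul_nonneg hld hL)]

end IsFlipChain

namespace IsFlipChain

variable {s n : ℕ} {lam : ℝ} {Ω : Finset (Finset Tile)} {P : Finset Tile → Finset Tile → ℝ}

lemma bigCount_le (hs : 2 ≤ s) (hP : IsFlipChain s n lam Ω P) {x : Finset Tile} (hx : x ∈ Ω) :
    bigCount s x ≤ n ^ 2 :=
  bigCount_eq_card_bigPositions ▸
    (card_le_card (((hP.mem_iff x).mp hx).bigPositions_subset hs)).trans card_squareRegion_le

lemma abs_sub_unitTiling_le (hs : 2 ≤ s) (hP : IsFlipChain s n lam Ω P) {g : Finset Tile → ℝ}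
    {L : ℝ} (hg : ∀ u v, u ∈ Ω ∧ v ∈ Ω ∧ centralFlipTo s u v → |g u - g v| ≤ L)
    {x : Finset Tile} (hx : x ∈ Ω) : |g x - g (unitTiling n)| ≤ bigCount s x * L := by
  induction hk : bigCount s x generalizing x with
  | zero => rw [((hP.mem_iff x).mp hx).eq_unitTiling hk]; simp
  | succ k ih =>
    obtain ⟨p, hp⟩ : (bigPositions s x).Nonempty := by
      rw [← card_pos, ← bigCount_eq_card_bigPositions, hk]; omega
    rw [mem_bigPositions] at hp
    have hy : splitAt s x p ∈ Ω := (hP.mem_iff _).mpr (((hP.mem_iff x).mp hx).splitAt hp)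
    have hky : bigCount s (splitAt s x p) = k := by rw [bigCount_splitAt hs hp, hk]; rfl
    calc |g x - g (unitTiling n)|
        ≤ |g x - g (splitAt s x p)| + |g (splitAt s x p) - g (unitTiling n)| := abs_sub_le _ _ _
      _ ≤ L + k * L := add_le_add (hg _ _ ⟨hx, hy, centralFlipTo_splitAt hp⟩) (ih hy hky)
      _ = (k + 1 : ℕ) * L := by push_cast; ring

lemma dTV_le (hs : 2 ≤ s) (hlam : 0 < lam) (hP : IsFlipChain s n lam Ω P)
    (hρ : 0 ≤ 1 - flipGap s lam / n ^ 2) {x : Finset Tile} (hx : x ∈ Ω) (t : ℕ) :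
    dTV Ω (fun y => matPow Ω P t x y)
        (fun T => lam ^ bigCount s T / ∑ T' ∈ Ω, lam ^ bigCount s T') ≤
      2 * n ^ 2 * (1 - flipGap s lam / n ^ 2) ^ t := by
  set ρ := 1 - flipGap s lam / n ^ 2
  set Z := ∑ T' ∈ Ω, lam ^ bigCount s T'
  have hU : unitTiling n ∈ Ω := (hP.mem_iff _).mpr isTiling_unitTiling
  have hZ : 0 < Z := sum_pos (fun _ _ => pow_pos hlam _) ⟨_, hU⟩
  have hstat : ∀ f, ∑ y ∈ Ω, lam ^ bigCount s y / Z * markovOp Ω P f y =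
      ∑ y ∈ Ω, lam ^ bigCount s y / Z * f y :=
    sum_mul_markovOp_of_detailed_balance (fun _ => hP.sum_row_eq_one) fun u hu v hv => by
      rw [div_mul_eq_mul_div, div_mul_eq_mul_div, hP.detailed_balance hs hu hv]
  have hosc : ∀ f : Finset Tile → ℝ, (∀ y, |f y| ≤ 1) → ∀ y ∈ Ω,
      (markovOp Ω P)^[t] f x - (markovOp Ω P)^[t] f y ≤ 4 * n ^ 2 * ρ ^ t := by
    intro f hf y hy
    set g := (markovOp Ω P)^[t] f
    have hlip := abs_iterate_sub_le (Q := markovOp Ω P) hρ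
      (fun g L hL hg _ _ huv => hP.abs_markovOp_sub_le hs hlam.le hL hg huv) zero_le_two
      (fun u v _ => (abs_sub _ _).trans (by linarith [hf u, hf v])) t
    have hdist : ∀ z ∈ Ω, |g z - g (unitTiling n)| ≤ n ^ 2 * (ρ ^ t * 2) := fun z hz =>
      (hP.abs_sub_unitTiling_le hs hlip hz).trans
        (mul_le_mul_of_nonneg_right (by exact_mod_cast hP.bigCount_le hs hz) (by positivity))
    have htri := abs_sub_le (g x) (g (unitTiling n)) (g y)
    rw [abs_sub_comm (g (unitTiling n))] at htri
    linarith [le_abs_self (g x - g y), hdist x hx, hdist y hy]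
  refine (dTV_matPow_le (fun y _ => by positivity) ?_ hstat hx hosc).trans_eq (by ring)
  rw [← sum_div, div_self hZ.ne']

end IsFlipChain

lemma flipGap_pos {s : ℕ} (hs : 2 ≤ s) {lam : ℝ} (hlam0 : 0 ≤ lam)
    (hlam : lam < 1 / ((2 * (s : ℝ) - 1) ^ 2 - 2)) : 0 < flipGap s lam := by
  have hs' : (2 : ℝ) ≤ s := by exact_mod_cast hs
  have hC : 0 < (2 * (s : ℝ) - 1) ^ 2 - 2 := by nlinarith
  have h1 : 0 < 1 - lam * ((2 * (s : ℝ) - 1) ^ 2 - 2) := by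
    have := (lt_div_iff₀ hC).mp hlam
    linarith
  exact div_pos h1 (by linarith)

lemma flipGap_le_one {s : ℕ} (hs : 2 ≤ s) {lam : ℝ} (hlam : 0 ≤ lam) : flipGap s lam ≤ 1 := by
  have hs' : (2 : ℝ) ≤ s := by exact_mod_cast hs
  have hC : 0 ≤ (2 * (s : ℝ) - 1) ^ 2 - 2 := by nlinarith
  rw [flipGap, div_le_one (by linarith)]
  nlinarith [mul_nonneg hlam hC]

lemma mul_one_sub_div_pow_le {N η K ε : ℝ} {t : ℕ} (hN : 0 < N) (hη : 0 < η) (hηN : η ≤ N)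
    (hK : 0 < K) (hε : 0 < ε) (ht : N / η * Real.log (K / ε) ≤ t) :
    K * (1 - η / N) ^ t ≤ ε := by
  have hlog : Real.log (K / ε) ≤ t * (η / N) :=
    calc Real.log (K / ε) = η / N * (N / η * Real.log (K / ε)) := by field_simp
      _ ≤ η / N * t := by gcongr
      _ = t * (η / N) := mul_comm _ _
  calc K * (1 - η / N) ^ t ≤ K * Real.exp (-(η / N)) ^ t := by
        gcongr
        · exact sub_nonneg.mpr ((div_le_one hN).mpr hηN)
        · linarith [Real.add_one_le_exp (-(η / N))]
    _ = K * Real.exp (-(t * (η / N))) := by rw [← Real.exp_nat_mul]; ring_nf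
    _ ≤ K * Real.exp (-Real.log (K / ε)) := by gcongr
    _ = ε := by rw [Real.exp_neg, Real.exp_log (by positivity)]; field_simp

lemma ceil_mul_log_le {n ε η : ℝ} (hn : 2 ≤ n) (hε0 : 0 < ε) (hε1 : ε < 1) (hη0 : 0 < η)
    (hη1 : η ≤ 1) :
    (⌈n ^ 2 / η * Real.log (2 * n ^ 2 / ε)⌉₊ : ℝ) ≤ 8 / η * n ^ 4 * Real.log (n / ε) := by
  have hX : 4 ≤ n ^ 2 / η := by rw [le_div_iff₀ hη0]; nlinarith
  have hnε : 2 ≤ n / ε := by rw [le_div_iff₀ hε0]; nlinarith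
  have hlog2 := Real.log_two_gt_d9
  have hℓ : Real.log 2 ≤ Real.log (2 * n ^ 2 / ε) :=
    Real.log_le_log two_pos (by rw [le_div_iff₀ hε0]; nlinarith)
  have hℓ4 : Real.log (2 * n ^ 2 / ε) ≤ 4 * Real.log (n / ε) := by
    rw [show 4 * Real.log (n / ε) = Real.log ((n / ε) ^ 4) by rw [Real.log_pow]; norm_num]
    refine Real.log_le_log (by positivity) ?_
    rw [div_pow, div_le_div_iff₀ hε0 (by positivity)]
    have : ε ^ 4 ≤ ε := pow_le_of_le_one hε0.le hε1.le (by norm_num)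
    have hn4 : 2 * n ^ 2 ≤ n ^ 4 := by nlinarith [mul_le_mul hn hn zero_le_two (by linarith)]
    nlinarith [mul_le_mul_of_nonneg_left this (by positivity : (0 : ℝ) ≤ 2 * n ^ 2),
      mul_le_mul_of_nonneg_right hn4 hε0.le]
  have hlogn : 0 ≤ Real.log (n / ε) := Real.log_nonneg (by linarith)
  calc (⌈n ^ 2 / η * Real.log (2 * n ^ 2 / ε)⌉₊ : ℝ)
      ≤ n ^ 2 / η * Real.log (2 * n ^ 2 / ε) + 1 :=
        (Nat.ceil_lt_add_one (mul_nonneg (by positivity) (by linarith))).le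
    _ ≤ 2 * (n ^ 2 / η) * Real.log (2 * n ^ 2 / ε) := by nlinarith
    _ ≤ 2 * (n ^ 2 / η) * (4 * Real.log (n / ε)) := by gcongr
    _ = 8 / η * n ^ 2 * Real.log (n / ε) := by ring
    _ ≤ 8 / η * n ^ 4 * Real.log (n / ε) := by gcongr <;> linarith

/-- The weighted central-flip chain MC_{(1,s)-square} on (1,s)-tilings of the n×n square,
with weight `λ` on the s×s tiles, is rapidly mixing for `0 < λ < 1/((2s−1)² − 2)`:
there is a constant `c > 0` (depending only on `s` and `λ`) such that for all `n ≥ s`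
and all `ε ∈ (0,1)`, `τ_mix(ε) ≤ c n⁴ ln(n/ε)`, where the stationary distribution is
`π(T) = λ^{b(T)}/Z` with `b(T)` the number of s×s tiles of `T`. -/
theorem rapid_mixing_weighted_one_s_square (s : ℕ) (hs : 2 ≤ s) (lam : ℝ) (hlam0 : 0 < lam)
    (hlam : lam < 1 / ((2 * (s : ℝ) - 1) ^ 2 - 2)) :
    ∃ c : ℝ, 0 < c ∧
      ∀ n : ℕ, s ≤ n →
        ∀ (Ω : Finset (Finset ((ℤ × ℤ) × ℕ)))
          (P : Finset ((ℤ × ℤ) × ℕ) → Finset ((ℤ × ℤ) × ℕ) → ℝ),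
          (∀ T, T ∈ Ω ↔ IsTiling 1 s (squareRegion n) T) →
          -- replacing one s×s tile by s² unit tiles
          (∀ T ∈ Ω, ∀ T' ∈ Ω, centralFlipTo s T T' →
              P T T' = 1 / ((n : ℝ) ^ 2 * (lam + 1))) →
          -- replacing s² unit tiles filling an s×s square by one s×s tile
          (∀ T ∈ Ω, ∀ T' ∈ Ω, centralFlipTo s T' T →
              P T T' = lam / ((n : ℝ) ^ 2 * (lam + 1))) →
          -- all other off-diagonal entries vanish
          (∀ T ∈ Ω, ∀ T' ∈ Ω, T ≠ T' → ¬ CentralFlip s T T' → P T T' = 0) →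
          -- diagonal entries
          (∀ T ∈ Ω, P T T = 1 - ∑ T' ∈ Ω.erase T, P T T') →
          ∀ ε : ℝ, 0 < ε → ε < 1 →
            (mixingTime Ω P
                (fun T => lam ^ bigCount s T / ∑ T' ∈ Ω, lam ^ bigCount s T') ε : ℝ) ≤
              c * (n : ℝ) ^ 4 * Real.log ((n : ℝ) / ε) := by
  have hη0 := flipGap_pos hs hlam0.le hlam
  have hη1 := flipGap_le_one hs hlam0.le
  refine ⟨8 / flipGap s lam, by positivity, fun n hn Ω P hΩ h2 h3 h4 h5 ε hε0 hε1 => ?_⟩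
  have hP : IsFlipChain s n lam Ω P := ⟨hΩ, h2, h3, h4, h5⟩
  have hn2 : (2 : ℝ) ≤ n := by exact_mod_cast hs.trans hn
  have hN : (0 : ℝ) < n ^ 2 := by positivity
  have hηN : flipGap s lam ≤ n ^ 2 := by nlinarith
  have hρ : 0 ≤ 1 - flipGap s lam / n ^ 2 := sub_nonneg.mpr ((div_le_one hN).mpr hηN)
  refine le_trans (Nat.cast_le.mpr (mixingTime_le fun x hx t ht => ?_))
    (ceil_mul_log_le hn2 hε0 hε1 hη0 hη1)
  exact (hP.dTV_le hs hlam0 hρ hx t).trans (mul_one_sub_div_pow_le hN hη0 hηN (by positivity) hε0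
    ((Nat.le_ceil _).trans (by exact_mod_cast ht)))
end

section
/- Let n ≥ 2. For p ∈ (ℤ/nℤ)² let Q(p) = {p, p+(1,0), p+(0,1), p+(1,1)} ⊆ (ℤ/nℤ)² (the 2×2 square at p on the torus). Then for every set U ⊆ (ℤ/nℤ)², the squares Q(p), p ∈ U, are pairwise disjoint if and only if U is an independent set of the king graph G_n on (ℤ/nℤ)². Consequently, U ↦ {(p,2) : p ∈ U} ∪ {(q,1) : q ∉ ⋃_{p∈U} Q(p)} is a bijection from the independent sets of G_n onto the (1,2)-square tilings of the n×n torus. -/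
/-- The king graph on the discrete torus (ℤ/nℤ)²: `u` adjacent to `v` iff `u ≠ v` and
both coordinates of `u − v` lie in `{−1, 0, 1}` (mod n). -/
def kingGraph (n : ℕ) : SimpleGraph (ZMod n × ZMod n) where
  Adj u v := u ≠ v ∧ (u.1 - v.1 = 0 ∨ u.1 - v.1 = 1 ∨ u.1 - v.1 = -1) ∧
      (u.2 - v.2 = 0 ∨ u.2 - v.2 = 1 ∨ u.2 - v.2 = -1)
  symm := by
    constructor
    rintro u v ⟨h, h1, h2⟩
    refine ⟨h.symm, ?_, ?_⟩
    · have e : v.1 - u.1 = -(u.1 - v.1) := by ring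
      rcases h1 with h1 | h1 | h1 <;> rw [e, h1] <;> simp
    · have e : v.2 - u.2 = -(u.2 - v.2) := by ring
      rcases h2 with h2 | h2 | h2 <;> rw [e, h2] <;> simp
  loopless := ⟨fun u h => h.1 rfl⟩

/-- An independent set of a graph: no two of its vertices are adjacent. -/
def IsIndepSet (n : ℕ) (U : Set (ZMod n × ZMod n)) : Prop :=
  ∀ u ∈ U, ∀ v ∈ U, ¬ (kingGraph n).Adj u v

/-- The 2×2 square at `p` on the torus. -/
def Q {n : ℕ} (p : ZMod n × ZMod n) : Set (ZMod n × ZMod n) :=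
  {p, p + (1, 0), p + (0, 1), p + (1, 1)}

/-- The cells covered by a tile `(p,k)` on the torus: `{p}` if `k = 1`,
and the 2×2 square `Q p` if `k = 2`. -/
def torusTile {n : ℕ} (t : (ZMod n × ZMod n) × ℕ) : Set (ZMod n × ZMod n) :=
  if t.2 = 2 then Q t.1 else {t.1}

/-- A (1,2)-square tiling of the n×n torus: tiles `(p,k)` with `k ∈ {1,2}`, pairwise
disjoint, covering the whole torus. -/
def IsTorusTiling (n : ℕ) (T : Set ((ZMod n × ZMod n) × ℕ)) : Prop :=
  (∀ t ∈ T, t.2 = 1 ∨ t.2 = 2) ∧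
  (∀ t ∈ T, ∀ t' ∈ T, t ≠ t' → Disjoint (torusTile t) (torusTile t')) ∧
  (⋃ t ∈ T, torusTile t) = Set.univ

/-!
`Q p` is the product `{p.1, p.1 + 1} ×ˢ {p.2, p.2 + 1}`, and two such two-element intervals
meet iff their left ends differ by `0` or `±1`; hence `Q p` and `Q q` meet iff `p = q` or `p`, `q`
are king-adjacent. A tiling is recovered from its set of squares, since its monominoes are
forced to be exactly the cells the squares leave uncovered.
-/

lemma Q_eq_prod {n : ℕ} (p : ZMod n × ZMod n) :
    Q p = ({p.1, p.1 + 1} : Set (ZMod n)) ×ˢ {p.2, p.2 + 1} := by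
  ext ⟨x, y⟩
  simp only [Q, Set.mem_insert_iff, Set.mem_singleton_iff, Set.mem_prod, Prod.ext_iff,
    Prod.fst_add, Prod.snd_add, add_zero]
  tauto

lemma pair_inter_pair_nonempty_iff {R : Type*} [CommRing R] (s t : R) :
    (({s, s + 1} : Set R) ∩ {t, t + 1}).Nonempty ↔ s - t = 0 ∨ s - t = 1 ∨ s - t = -1 := by
  simp only [Set.Nonempty, Set.mem_inter_iff, Set.mem_insert_iff, Set.mem_singleton_iff]
  constructor
  · rintro ⟨a, rfl | rfl, h | h⟩
    · exact .inl (by linear_combination h)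
    · exact .inr (.inl (by linear_combination h))
    · exact .inr (.inr (by linear_combination h))
    · exact .inl (by linear_combination h)
  · rintro (h | h | h)
    · exact ⟨s, .inl rfl, .inl (by linear_combination h)⟩
    · exact ⟨s, .inl rfl, .inr (by linear_combination h)⟩
    · exact ⟨t, .inr (by linear_combination -h), .inl rfl⟩

lemma not_disjoint_Q_iff {n : ℕ} (p q : ZMod n × ZMod n) :
    ¬ Disjoint (Q p) (Q q) ↔ p = q ∨ (kingGraph n).Adj p q := by
  rw [Set.not_disjoint_iff_nonempty_inter, Q_eq_prod, Q_eq_prod, Set.prod_inter_prod,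
    Set.prod_nonempty_iff, pair_inter_pair_nonempty_iff, pair_inter_pair_nonempty_iff]
  constructor
  · intro h
    exact (eq_or_ne p q).imp_right fun hne => ⟨hne, h⟩
  · rintro (rfl | ⟨-, h⟩)
    · simp
    · exact h

lemma pairwise_disjoint_Q_iff_isIndepSet {n : ℕ} (U : Set (ZMod n × ZMod n)) :
    (∀ p ∈ U, ∀ q ∈ U, p ≠ q → Disjoint (Q p) (Q q)) ↔ IsIndepSet n U := by
  constructor
  · intro h u hu v hv hadj
    exact (not_disjoint_Q_iff u v).2 (.inr hadj) (h u hu v hv hadj.ne)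
  · intro h p hp q hq hne
    by_contra hpq
    exact ((not_disjoint_Q_iff p q).1 hpq).elim hne (h p hp q hq)

lemma torusTile_two {n : ℕ} (p : ZMod n × ZMod n) : torusTile (p, 2) = Q p := if_pos rfl

lemma torusTile_one {n : ℕ} (p : ZMod n × ZMod n) : torusTile (p, 1) = {p} :=
  if_neg (by norm_num)

def tilingOf {n : ℕ} (U : Set (ZMod n × ZMod n)) : Set ((ZMod n × ZMod n) × ℕ) :=
  ((fun p => (p, 2)) '' U) ∪ ((fun q => (q, 1)) '' (⋃ p ∈ U, Q p)ᶜ)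

def tilingSquares {n : ℕ} (T : Set ((ZMod n × ZMod n) × ℕ)) : Set (ZMod n × ZMod n) :=
  {p | (p, 2) ∈ T}

section tilingOf

variable {n : ℕ} {U : Set (ZMod n × ZMod n)}

@[simp]
lemma mk_two_mem_tilingOf (p : ZMod n × ZMod n) : (p, 2) ∈ tilingOf U ↔ p ∈ U := by
  simp [tilingOf]

@[simp]
lemma mk_one_mem_tilingOf (q : ZMod n × ZMod n) :
    (q, 1) ∈ tilingOf U ↔ q ∉ ⋃ p ∈ U, Q p := by
  simp [tilingOf]

lemma tilingOf_injective : Function.Injective (tilingOf (n := n)) := by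
  intro U V h
  ext p
  rw [← mk_two_mem_tilingOf, h, mk_two_mem_tilingOf]

lemma isTorusTiling_tilingOf (hU : ∀ p ∈ U, ∀ q ∈ U, p ≠ q → Disjoint (Q p) (Q q)) :
    IsTorusTiling n (tilingOf U) := by
  refine ⟨?_, ?_, ?_⟩
  · rintro t (⟨p, -, rfl⟩ | ⟨q, -, rfl⟩)
    exacts [.inr rfl, .inl rfl]
  · rintro t (⟨p, hp, rfl⟩ | ⟨p, hp, rfl⟩) t' (⟨q, hq, rfl⟩ | ⟨q, hq, rfl⟩) hne
    · rw [torusTile_two, torusTile_two]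
      exact hU p hp q hq (fun h => hne (h ▸ rfl))
    · rw [torusTile_two, torusTile_one, Set.disjoint_singleton_right]
      exact fun hqp => hq (Set.mem_biUnion hp hqp)
    · rw [torusTile_one, torusTile_two, Set.disjoint_singleton_left]
      exact fun hpq => hp (Set.mem_biUnion hq hpq)
    · rw [torusTile_one, torusTile_one, Set.disjoint_singleton]
      exact fun h => hne (h ▸ rfl)
  · refine Set.eq_univ_of_forall fun x => Set.mem_iUnion₂.2 ?_
    by_cases hx : x ∈ ⋃ p ∈ U, Q p
    · obtain ⟨p, hp, hxp⟩ := Set.mem_iUnion₂.1 hx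
      exact ⟨(p, 2), (mk_two_mem_tilingOf p).2 hp, (torusTile_two p).symm ▸ hxp⟩
    · exact ⟨(x, 1), (mk_one_mem_tilingOf x).2 hx, (torusTile_one x).symm ▸ rfl⟩

end tilingOf

namespace IsTorusTiling

variable {n : ℕ} {T : Set ((ZMod n × ZMod n) × ℕ)}

lemma eq_mk_one_or_eq_mk_two (hT : IsTorusTiling n T) {t : (ZMod n × ZMod n) × ℕ}
    (ht : t ∈ T) : t = (t.1, 1) ∨ t = (t.1, 2) :=
  (hT.1 t ht).imp (Prod.ext rfl) (Prod.ext rfl)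

lemma pairwise_disjoint_Q_tilingSquares (hT : IsTorusTiling n T) :
    ∀ p ∈ tilingSquares T, ∀ q ∈ tilingSquares T, p ≠ q → Disjoint (Q p) (Q q) := by
  intro p hp q hq hne
  have := hT.2.1 _ hp _ hq fun h => hne (Prod.ext_iff.1 h).1
  rwa [torusTile_two, torusTile_two] at this

lemma mk_one_mem_iff (hT : IsTorusTiling n T) (q : ZMod n × ZMod n) :
    (q, 1) ∈ T ↔ q ∉ ⋃ p ∈ tilingSquares T, Q p := by
  constructor
  · intro hq hqU
    obtain ⟨p, hp, hqp⟩ := Set.mem_iUnion₂.1 hqU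
    have := hT.2.1 _ hq _ hp fun h => absurd (Prod.ext_iff.1 h).2 (by norm_num)
    rw [torusTile_one, torusTile_two, Set.disjoint_singleton_left] at this
    exact this hqp
  · intro hq
    obtain ⟨t, ht, hqt⟩ := Set.mem_iUnion₂.1 (hT.2.2 ▸ Set.mem_univ q)
    rcases hT.eq_mk_one_or_eq_mk_two ht with h | h
    · rw [h, torusTile_one, Set.mem_singleton_iff] at hqt
      rwa [hqt, ← h]
    · rw [h, torusTile_two] at hqt
      exact absurd (Set.mem_biUnion (show t.1 ∈ tilingSquares T from h ▸ ht) hqt) hq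

lemma tilingOf_tilingSquares (hT : IsTorusTiling n T) : tilingOf (tilingSquares T) = T := by
  ext t
  constructor
  · rintro (⟨p, hp, rfl⟩ | ⟨q, hq, rfl⟩)
    exacts [hp, (hT.mk_one_mem_iff q).2 hq]
  · intro ht
    rcases hT.eq_mk_one_or_eq_mk_two ht with h | h <;> rw [h] at ht ⊢
    · exact (mk_one_mem_tilingOf _).2 ((hT.mk_one_mem_iff _).1 ht)
    · exact (mk_two_mem_tilingOf _).2 ht

end IsTorusTiling

theorem king_indep_sets_biject_with_torus_tilings_general (n : ℕ) :
    (∀ U : Set (ZMod n × ZMod n),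
      (∀ p ∈ U, ∀ q ∈ U, p ≠ q → Disjoint (Q p) (Q q)) ↔ IsIndepSet n U) ∧
    Set.BijOn
      (fun U : Set (ZMod n × ZMod n) =>
        ((fun p => (p, 2)) '' U) ∪
        ((fun q => (q, 1)) '' {q | q ∉ ⋃ p ∈ U, Q p}))
      {U | IsIndepSet n U}
      {T | IsTorusTiling n T} := by
  refine ⟨pairwise_disjoint_Q_iff_isIndepSet, ?_⟩
  show Set.BijOn tilingOf _ _
  refine ⟨fun U hU => isTorusTiling_tilingOf ((pairwise_disjoint_Q_iff_isIndepSet U).2 hU),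
    tilingOf_injective.injOn, fun T hT => ?_⟩
  exact ⟨tilingSquares T, (pairwise_disjoint_Q_iff_isIndepSet _).1
    hT.pairwise_disjoint_Q_tilingSquares, hT.tilingOf_tilingSquares⟩

/-- For every `U ⊆ (ℤ/nℤ)²`, the 2×2 squares `Q p`, `p ∈ U`, are pairwise disjoint iff
`U` is an independent set of the king graph; consequently
`U ↦ {(p,2) : p ∈ U} ∪ {(q,1) : q ∉ ⋃_{p∈U} Q p}` is a bijection from the independent
sets of the king graph onto the (1,2)-square tilings of the n×n torus. -/
theorem king_indep_sets_biject_with_torus_tilings (n : ℕ) (hn : 2 ≤ n) :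
    (∀ U : Set (ZMod n × ZMod n),
      (∀ p ∈ U, ∀ q ∈ U, p ≠ q → Disjoint (Q p) (Q q)) ↔ IsIndepSet n U) ∧
    Set.BijOn
      (fun U : Set (ZMod n × ZMod n) =>
        ((fun p => (p, 2)) '' U) ∪
        ((fun q => (q, 1)) '' {q | q ∉ ⋃ p ∈ U, Q p}))
      {U | IsIndepSet n U}
      {T | IsTorusTiling n T} :=
  king_indep_sets_biject_with_torus_tilings_general n
end

section
/- Let m, s ≥ 1 be integers with m ≠ s, let p = lcm(m,s), and let R = {0,…,p−1}² ⊆ ℤ² be the p×p square (the central block). Then R has exactly two (m,s)-tilings: the grid of (p/m)² squares of size m, namely {((im, jm), m) : 0 ≤ i, j < p/m}, and the grid of (p/s)² squares of size s, namely {((is, js), s) : 0 ≤ i, j < p/s}. -/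
open Finset

/-- The c×c grid of k×k tiles placed at positions `(ik, jk)`, `0 ≤ i, j < c`. -/
def gridTiling (k c : ℕ) : Finset ((ℤ × ℤ) × ℕ) :=
  (Finset.range c ×ˢ Finset.range c).image
    fun ij => ((((ij.1 * k : ℕ) : ℤ), ((ij.2 * k : ℕ) : ℤ)), k)

/-! In an `(m, s)`-tiling of the square of side `p = lcm m s`, the tiles meeting a fixed row have
sizes summing to `p`, and `a * m + b * s = lcm m s` forces `a = 0` or `b = 0`; so all tiles meeting
a row have the same size, and by transposition so do all tiles meeting a column. Any two tiles are
linked through the tile covering the cell in the column of the first and the row of the second,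
hence the tiling uses a single size `k`. A tiling by `k`-squares alone is aligned to the `k`-grid:
the cell just left of a tile off the left edge lies in a tile ending exactly there. -/

lemma sqCells_eq (q : ℤ × ℤ) (k : ℕ) :
    sqCells q k = Ico q.1 (q.1 + k) ×ˢ Ico q.2 (q.2 + k) := by
  ext z
  simp only [sqCells, mem_image, mem_product, mem_range, mem_Ico, Prod.exists, Prod.ext_iff]
  constructor
  · rintro ⟨i, j, ⟨hi, hj⟩, h1, h2⟩
    omega
  · intro hz
    exact ⟨(z.1 - q.1).toNat, (z.2 - q.2).toNat, by omega⟩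

lemma mem_sqCells_s9 {q z : ℤ × ℤ} {k : ℕ} :
    z ∈ sqCells q k ↔ q.1 ≤ z.1 ∧ z.1 < q.1 + k ∧ q.2 ≤ z.2 ∧ z.2 < q.2 + k := by
  simp only [sqCells_eq, mem_product, mem_Ico, and_assoc]

lemma squareRegion_eq (n : ℕ) : squareRegion n = Ico 0 (n : ℤ) ×ˢ Ico 0 (n : ℤ) := by
  simpa [sqCells, squareRegion] using sqCells_eq 0 n

lemma mem_squareRegion {n : ℕ} {z : ℤ × ℤ} :
    z ∈ squareRegion n ↔ 0 ≤ z.1 ∧ z.1 < n ∧ 0 ≤ z.2 ∧ z.2 < n := by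
  simp only [squareRegion_eq, mem_product, mem_Ico, and_assoc]

lemma sqCells_swap (q : ℤ × ℤ) (k : ℕ) :
    sqCells q.swap k = (sqCells q k).image Prod.swap := by
  simp only [sqCells_eq, image_swap_product, Prod.fst_swap, Prod.snd_swap]

lemma squareRegion_image_swap (n : ℕ) : (squareRegion n).image Prod.swap = squareRegion n := by
  rw [squareRegion_eq, image_swap_product]

lemma card_filter_snd_sqCells (q : ℤ × ℤ) (k : ℕ) (y : ℤ) :
    #((sqCells q k).filter (·.2 = y)) = if q.2 ≤ y ∧ y < q.2 + k then k else 0 := by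
  rw [sqCells_eq, filter_product_right (· = y), filter_eq', card_product, Int.card_Ico]
  simp only [mem_Ico]
  split_ifs <;> simp

lemma card_filter_snd_squareRegion {n : ℕ} {y : ℤ} (h0 : 0 ≤ y) (hn : y < n) :
    #((squareRegion n).filter (·.2 = y)) = n := by
  rw [squareRegion_eq, filter_product_right (· = y), filter_eq', if_pos (mem_Ico.2 ⟨h0, hn⟩),
    card_product, Int.card_Ico]
  simp

lemma mem_gridTiling {k c : ℕ} {t : (ℤ × ℤ) × ℕ} :
    t ∈ gridTiling k c ↔ ∃ i < c, ∃ j < c, t = ((((i * k : ℕ) : ℤ), ((j * k : ℕ) : ℤ)), k) := by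
  simp only [gridTiling, mem_image, mem_product, mem_range, Prod.exists, and_assoc, eq_comm]
  constructor
  · rintro ⟨i, j, hi, hj, rfl⟩
    exact ⟨i, hi, j, hj, rfl⟩
  · rintro ⟨i, hi, j, hj, rfl⟩
    exact ⟨i, j, hi, hj, rfl⟩

lemma Nat.eq_zero_or_eq_zero_of_mul_add_mul_eq_lcm {m s a b : ℕ} (hm : 0 < m) (hs : 0 < s)
    (h : a * m + b * s = Nat.lcm m s) : a = 0 ∨ b = 0 := by
  -- `b * s = lcm m s - a * m` is a common multiple of `m` and `s`, hence `0` or at least `lcm m s`.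
  have hdvd : Nat.lcm m s ∣ b * s := by
    refine Nat.lcm_dvd ?_ (dvd_mul_left s b)
    exact (Nat.dvd_add_right (dvd_mul_left m a)).1 (h ▸ Nat.dvd_lcm_left m s)
  rcases Nat.eq_zero_or_pos (b * s) with hb | hb
  · exact Or.inr (by simpa [hs.ne'] using hb)
  · have := Nat.le_of_dvd hb hdvd
    exact Or.inl (by nlinarith)

lemma Nat.eq_of_lt_mul_add {i j k : ℕ} (hij : i * k < j * k + k) (hji : j * k < i * k + k) :
    i = j := by
  by_contra hne
  rcases Nat.lt_or_gt_of_ne hne with h | h <;> nlinarith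

lemma Finset.eq_of_sum_eq_lcm {ι : Type*} {B : Finset ι} {f : ι → ℕ} {m s : ℕ} (hm : 0 < m)
    (hs : 0 < s) (hf : ∀ i ∈ B, f i = m ∨ f i = s) (hsum : ∑ i ∈ B, f i = Nat.lcm m s)
    {i j : ι} (hi : i ∈ B) (hj : j ∈ B) : f i = f j := by
  have hsplit : ∑ i ∈ B, f i = #(B.filter (f · = m)) * m + #(B.filter (f · ≠ m)) * s := by
    rw [← sum_filter_add_sum_filter_not B (f · = m), sum_congr rfl fun i hi => (mem_filter.1 hi).2,
      sum_congr rfl fun i hi => (hf i (mem_filter.1 hi).1).resolve_left (mem_filter.1 hi).2,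
      sum_const, sum_const, smul_eq_mul, smul_eq_mul]
  rcases Nat.eq_zero_or_eq_zero_of_mul_add_mul_eq_lcm hm hs (hsplit ▸ hsum) with h | h <;>
    simp only [card_eq_zero, filter_eq_empty_iff, not_not] at h
  · rw [(hf i hi).resolve_left (h hi), (hf j hj).resolve_left (h hj)]
  · rw [h hi, h hj]

namespace IsTiling

variable {m s n k : ℕ} {R : Finset (ℤ × ℤ)} {T : Finset ((ℤ × ℤ) × ℕ)} {t t' : (ℤ × ℤ) × ℕ}
  {z : ℤ × ℤ}

lemma size_pos (hm : 0 < m) (hs : 0 < s) (hT : IsTiling m s R T) (ht : t ∈ T) : 0 < t.2 := by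
  rcases hT.1 t ht with h | h <;> omega

lemma mem_of_mem_sqCells (hT : IsTiling m s R T) (ht : t ∈ T) (hz : z ∈ sqCells t.1 t.2) :
    z ∈ R :=
  hT.2.2 ▸ mem_biUnion.2 ⟨t, ht, hz⟩

lemma exists_mem_sqCells (hT : IsTiling m s R T) (hz : z ∈ R) :
    ∃ t ∈ T, z ∈ sqCells t.1 t.2 :=
  mem_biUnion.1 (hT.2.2 ▸ hz)

lemma eq_of_mem_sqCells (hT : IsTiling m s R T) (ht : t ∈ T) (ht' : t' ∈ T)
    (hz : z ∈ sqCells t.1 t.2) (hz' : z ∈ sqCells t'.1 t'.2) : t = t' := by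
  by_contra hne
  exact disjoint_left.1 (hT.2.1 t ht t' ht' hne) hz hz'

lemma corner_mem (hT : IsTiling m s R T) (ht : t ∈ T) (hpos : 0 < t.2) : t.1 ∈ R :=
  hT.mem_of_mem_sqCells ht (mem_sqCells_s9.2 (by omega))

lemma transpose (hT : IsTiling m s R T) :
    IsTiling m s (R.image Prod.swap) (T.image fun t => (t.1.swap, t.2)) := by
  obtain ⟨hsize, hdisj, hcover⟩ := hT
  refine ⟨forall_mem_image.2 hsize, ?_, ?_⟩
  · simp only [forall_mem_image, sqCells_swap]
    intro t ht t' ht' hne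
    exact (disjoint_image Prod.swap_injective).2 (hdisj t ht t' ht' (by rintro rfl; exact hne rfl))
  · rw [← hcover, image_biUnion, biUnion_image]
    simp only [sqCells_swap]

lemma card_filter_snd_eq_sum (hT : IsTiling m s R T) (y : ℤ) :
    #(R.filter (·.2 = y)) = ∑ t ∈ T with t.1.2 ≤ y ∧ y < t.1.2 + t.2, t.2 := by
  rw [sum_filter, ← hT.2.2, filter_biUnion, card_biUnion]
  · simp only [card_filter_snd_sqCells]
  · intro t ht t' ht' hne
    exact (hT.2.1 t ht t' ht' hne).mono (filter_subset _ _) (filter_subset _ _)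

lemma size_eq_of_meets_row (hm : 0 < m) (hs : 0 < s)
    (hT : IsTiling m s (squareRegion (Nat.lcm m s)) T) (ht : t ∈ T) (ht' : t' ∈ T) {y : ℤ}
    (hy : t.1.2 ≤ y ∧ y < t.1.2 + t.2)
    (hy' : t'.1.2 ≤ y ∧ y < t'.1.2 + t'.2) : t.2 = t'.2 := by
  have hyR := mem_squareRegion.1 <| hT.mem_of_mem_sqCells ht (z := (t.1.1, y))
    (mem_sqCells_s9.2 (by have := hT.size_pos hm hs ht; omega))
  have hsum := hT.card_filter_snd_eq_sum y
  rw [card_filter_snd_squareRegion hyR.2.2.1 hyR.2.2.2] at hsum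
  exact eq_of_sum_eq_lcm hm hs (fun t ht => hT.1 t (mem_filter.1 ht).1) hsum.symm
    (mem_filter.2 ⟨ht, hy⟩) (mem_filter.2 ⟨ht', hy'⟩)

lemma size_eq_of_meets_col (hm : 0 < m) (hs : 0 < s)
    (hT : IsTiling m s (squareRegion (Nat.lcm m s)) T) (ht : t ∈ T) (ht' : t' ∈ T) {x : ℤ}
    (hx : t.1.1 ≤ x ∧ x < t.1.1 + t.2)
    (hx' : t'.1.1 ≤ x ∧ x < t'.1.1 + t'.2) : t.2 = t'.2 := by
  have hT' := hT.transpose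
  rw [squareRegion_image_swap] at hT'
  exact hT'.size_eq_of_meets_row (t := (t.1.swap, t.2)) (t' := (t'.1.swap, t'.2)) hm hs
    (mem_image_of_mem _ ht) (mem_image_of_mem _ ht') hx hx'

lemma size_eq (hm : 0 < m) (hs : 0 < s) (hT : IsTiling m s (squareRegion (Nat.lcm m s)) T)
    (ht : t ∈ T) (ht' : t' ∈ T) : t.2 = t'.2 := by
  have hk := hT.size_pos hm hs ht
  have hk' := hT.size_pos hm hs ht'
  have hcorner := mem_squareRegion.1 (hT.corner_mem ht hk)
  have hcorner' := mem_squareRegion.1 (hT.corner_mem ht' hk')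
  obtain ⟨t'', ht'', hz⟩ := hT.exists_mem_sqCells (z := (t.1.1, t'.1.2))
    (mem_squareRegion.2 (by omega))
  rw [mem_sqCells_s9] at hz
  calc t.2 = t''.2 := hT.size_eq_of_meets_col hm hs ht ht'' (x := t.1.1) (by omega) (by omega)
    _ = t'.2 := hT.size_eq_of_meets_row hm hs ht'' ht' (y := t'.1.2) (by omega) (by omega)

lemma exists_fst_eq_mul (hk : 0 < k) (hT : IsTiling m s (squareRegion n) T)
    (hsize : ∀ t ∈ T, t.2 = k) (ht : t ∈ T) : ∃ i : ℕ, t.1.1 = ((i * k : ℕ) : ℤ) := by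
  suffices ∀ x : ℕ, ∀ t ∈ T, t.1.1 = x → ∃ i : ℕ, t.1.1 = ((i * k : ℕ) : ℤ) by
    have hcorner := mem_squareRegion.1 (hT.corner_mem ht (hsize t ht ▸ hk))
    exact this t.1.1.toNat t ht (by omega)
  intro x
  induction x using Nat.strong_induction_on with
  | _ x ih =>
  intro t ht hx
  rcases Nat.eq_zero_or_pos x with rfl | hx0
  · exact ⟨0, by simpa using hx⟩
  have hkt := hsize t ht
  have hcorner := mem_squareRegion.1 (hT.corner_mem ht (hkt ▸ hk))
  obtain ⟨t', ht', hz⟩ := hT.exists_mem_sqCells (z := (t.1.1 - 1, t.1.2))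
    (mem_squareRegion.2 (by omega))
  have hkt' := hsize t' ht'
  have hcorner' := mem_squareRegion.1 (hT.corner_mem ht' (hkt' ▸ hk))
  rw [mem_sqCells_s9] at hz
  have hadj : t'.1.1 + k = t.1.1 := by
    by_contra hne
    have := hT.eq_of_mem_sqCells ht ht' (z := t.1) (mem_sqCells_s9.2 (by omega))
      (mem_sqCells_s9.2 (by omega))
    subst this
    omega
  obtain ⟨i, hi⟩ := ih (x - k) (by omega) t' ht' (by omega)
  exact ⟨i + 1, by push_cast at hi ⊢; linarith⟩

lemma exists_snd_eq_mul (hk : 0 < k) (hT : IsTiling m s (squareRegion n) T)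
    (hsize : ∀ t ∈ T, t.2 = k) (ht : t ∈ T) : ∃ j : ℕ, t.1.2 = ((j * k : ℕ) : ℤ) := by
  have hT' := hT.transpose
  rw [squareRegion_image_swap] at hT'
  exact hT'.exists_fst_eq_mul hk (forall_mem_image.2 hsize) (t := (t.1.swap, t.2))
    (mem_image_of_mem _ ht)

lemma eq_gridTiling (hk : 0 < k) (hT : IsTiling m s (squareRegion n) T)
    (hsize : ∀ t ∈ T, t.2 = k) : T = gridTiling k (n / k) := by
  have hgrid : ∀ t ∈ T, ∃ i j : ℕ, t = ((((i * k : ℕ) : ℤ), ((j * k : ℕ) : ℤ)), k) := by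
    intro t ht
    obtain ⟨i, hi⟩ := hT.exists_fst_eq_mul hk hsize ht
    obtain ⟨j, hj⟩ := hT.exists_snd_eq_mul hk hsize ht
    exact ⟨i, j, Prod.ext (Prod.ext hi hj) (hsize t ht)⟩
  ext t
  rw [mem_gridTiling]
  constructor
  · intro ht
    obtain ⟨i, j, rfl⟩ := hgrid t ht
    have hfar := mem_squareRegion.1 <| hT.mem_of_mem_sqCells ht
      (z := (((i * k : ℕ) : ℤ) + k - 1, ((j * k : ℕ) : ℤ) + k - 1))
      (mem_sqCells_s9.2 (by dsimp only; omega))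
    dsimp only at hfar
    refine ⟨i, (Nat.le_div_iff_mul_le hk).2 ?_, j, (Nat.le_div_iff_mul_le hk).2 ?_, rfl⟩ <;>
      rw [Nat.succ_mul] <;> omega
  · rintro ⟨i, hi, j, hj, rfl⟩
    have hi' := (Nat.le_div_iff_mul_le hk).1 hi
    have hj' := (Nat.le_div_iff_mul_le hk).1 hj
    rw [Nat.succ_mul] at hi' hj'
    obtain ⟨t, ht, hz⟩ := hT.exists_mem_sqCells (z := (((i * k : ℕ) : ℤ), ((j * k : ℕ) : ℤ)))
      (mem_squareRegion.2 (by omega))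
    obtain ⟨i', j', rfl⟩ := hgrid t ht
    rw [mem_sqCells_s9] at hz
    dsimp only at hz
    rwa [Nat.eq_of_lt_mul_add (i := i') (j := i) (k := k) (by omega) (by omega),
      Nat.eq_of_lt_mul_add (i := j') (j := j) (k := k) (by omega) (by omega)] at ht

end IsTiling

lemma isTiling_gridTiling {m s k n : ℕ} (hk : k = m ∨ k = s) (hk0 : 0 < k) (hdvd : k ∣ n) :
    IsTiling m s (squareRegion n) (gridTiling k (n / k)) := by
  refine ⟨?_, ?_, ?_⟩
  · intro t ht
    obtain ⟨i, -, j, -, rfl⟩ := mem_gridTiling.1 ht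
    exact hk
  · intro t ht t' ht' hne
    obtain ⟨i, -, j, -, rfl⟩ := mem_gridTiling.1 ht
    obtain ⟨i', -, j', -, rfl⟩ := mem_gridTiling.1 ht'
    refine disjoint_left.2 fun z hz hz' => hne ?_
    rw [mem_sqCells_s9] at hz hz'
    dsimp only at hz hz'
    rw [Nat.eq_of_lt_mul_add (i := i) (j := i') (k := k) (by omega) (by omega),
      Nat.eq_of_lt_mul_add (i := j) (j := j') (k := k) (by omega) (by omega)]
  · ext z
    rw [mem_biUnion, mem_squareRegion]
    constructor
    · rintro ⟨t, ht, hz⟩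
      obtain ⟨i, hi, j, hj, rfl⟩ := mem_gridTiling.1 ht
      have hi' := (Nat.le_div_iff_mul_le hk0).1 hi
      have hj' := (Nat.le_div_iff_mul_le hk0).1 hj
      rw [Nat.succ_mul] at hi' hj'
      rw [mem_sqCells_s9] at hz
      dsimp only at hz
      omega
    · intro hz
      refine ⟨((((z.1.toNat / k * k : ℕ) : ℤ), ((z.2.toNat / k * k : ℕ) : ℤ)), k),
        mem_gridTiling.2 ⟨_, Nat.div_lt_div_of_lt_of_dvd hdvd (by omega),
          _, Nat.div_lt_div_of_lt_of_dvd hdvd (by omega), rfl⟩, mem_sqCells_s9.2 ?_⟩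
      have := Nat.div_mul_le_self z.1.toNat k
      have := Nat.div_mul_le_self z.2.toNat k
      have := Nat.lt_div_mul_add (a := z.1.toNat) hk0
      have := Nat.lt_div_mul_add (a := z.2.toNat) hk0
      dsimp only
      omega

theorem central_block_has_two_tilings_general (m s : ℕ) (hm : 1 ≤ m) (hs : 1 ≤ s) :
    {T | IsTiling m s (squareRegion (Nat.lcm m s)) T} =
      {gridTiling m (Nat.lcm m s / m), gridTiling s (Nat.lcm m s / s)} := by
  ext T
  simp only [Set.mem_ofPred_eq, Set.mem_insert_iff, Set.mem_singleton_iff]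
  constructor
  · intro hT
    obtain ⟨t, ht, -⟩ := hT.exists_mem_sqCells (z := (0, 0))
      (mem_squareRegion.2 (by have := Nat.lcm_pos hm hs; omega))
    have hsize : ∀ t' ∈ T, t'.2 = t.2 := fun t' ht' => hT.size_eq hm hs ht' ht
    rcases hT.1 t ht with hk | hk <;> rw [hk] at hsize
    · exact Or.inl (hT.eq_gridTiling hm hsize)
    · exact Or.inr (hT.eq_gridTiling hs hsize)
  · rintro (rfl | rfl)
    · exact isTiling_gridTiling (Or.inl rfl) hm (Nat.dvd_lcm_left m s)
    · exact isTiling_gridTiling (Or.inr rfl) hs (Nat.dvd_lcm_right m s)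

/-- The central block, the p×p square with `p = lcm(m,s)`, has exactly two
(m,s)-tilings: the grid of (p/m)² squares of size m and the grid of (p/s)² squares of
size s. -/
theorem central_block_has_two_tilings (m s : ℕ) (hm : 1 ≤ m) (hs : 1 ≤ s) (hms : m ≠ s) :
    {T | IsTiling m s (squareRegion (Nat.lcm m s)) T} =
      {gridTiling m (Nat.lcm m s / m), gridTiling s (Nat.lcm m s / s)} :=
  central_block_has_two_tilings_general m s hm hs
end

section
/- Let m, s ≥ 2 be integers with gcd(m,s) = 1. The only pair (a,b) of nonnegative integers satisfying a·m² + b·s² = m·s·(m+s) is (a,b) = (s, m). -/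
/-!
Since `m s (m + s) = s·m² + m·s²` and `s²` is invertible modulo `m²`, reducing the equation
modulo `m²` gives `b ≡ m`; as `0 ≤ b < m + m²` and `m < m²`, this forces `b = m`.
Exchanging the roles of `m` and `s` gives `a = s`.
-/

theorem IsCoprime.dvd_sub_of_mul_add_mul_eq {R : Type*} [CommRing R] {u v x y x' y' : R}
    (huv : IsCoprime u v) (h : x * u + y * v = x' * u + y' * v) : u ∣ y - y' :=
  huv.dvd_of_dvd_mul_right ⟨x' - x, by linear_combination h⟩

theorem lt_add_sq_of_mul_sq_add_mul_sq_eq {m s a b : ℕ} (hm : 0 < m) (hs : 2 ≤ s)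
    (h : a * m ^ 2 + b * s ^ 2 = m * s * (m + s)) : b < m + m ^ 2 := by
  have hbs : b * s ≤ m ^ 2 + m * s :=
    Nat.le_of_mul_le_mul_right (by nlinarith) (by omega : 0 < s)
  by_contra! hb
  nlinarith [Nat.mul_le_mul_right s hb]

theorem eq_of_mul_sq_add_mul_sq_eq {m s a b : ℕ} (hm : 2 ≤ m) (hs : 2 ≤ s)
    (hcop : Nat.Coprime m s) (h : a * m ^ 2 + b * s ^ 2 = m * s * (m + s)) : b = m := by
  have hcop2 : IsCoprime ((m : ℤ) ^ 2) ((s : ℤ) ^ 2) := (Nat.isCoprime_iff_coprime.mpr hcop).pow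
  have hdvd : (m : ℤ) ^ 2 ∣ b - m :=
    hcop2.dvd_sub_of_mul_add_mul_eq (x := (a : ℤ)) (x' := s) <| by
      linear_combination (by exact_mod_cast h : (a * m ^ 2 + b * s ^ 2 : ℤ) = m * s * (m + s))
  have hb : (b : ℤ) < m + m ^ 2 := by
    exact_mod_cast lt_add_sq_of_mul_sq_add_mul_sq_eq (by omega) hs h
  have habs : |(b : ℤ) - m| < m ^ 2 := abs_lt.mpr ⟨by nlinarith, by linarith⟩
  exact_mod_cast sub_eq_zero.mp (Int.eq_zero_of_abs_lt_dvd hdvd habs)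

/-- For coprime integers `m, s ≥ 2`, the only pair `(a,b)` of nonnegative integers with
`a·m² + b·s² = m·s·(m+s)` is `(s, m)`. -/
theorem area_equation_horizontal_block (m s : ℕ) (hm : 2 ≤ m) (hs : 2 ≤ s)
    (hcop : Nat.Coprime m s) (a b : ℕ) :
    a * m ^ 2 + b * s ^ 2 = m * s * (m + s) ↔ a = s ∧ b = m := by
  constructor
  · intro h
    exact ⟨eq_of_mul_sq_add_mul_sq_eq hs hm hcop.symm (by linarith),
      eq_of_mul_sq_add_mul_sq_eq hm hs hcop h⟩
  · rintro ⟨rfl, rfl⟩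
    ring
end
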